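/- arXiv:1606.08325 — 9 statements merged into one kernel-verified Lean document; each statement's English description precedes it below -/
import Mathlib

section
/- Let n ∈ ℕ, r ∈ ℕ with r ≥ 1, and let f₁,…,f_r and g₁,…,g_r be real-valued functions on ℝ, each n times differentiable. Suppose Σ_{i=1}^r g_i = 0 (identically). Then for every multi-index s = (s₁,…,s_r) of nonnegative integers with s₁+⋯+s_r = n, one has Σ_{k₁+⋯+k_r = n} (n! / (k₁!⋯k_r!)) · Π_{i=1}^r (f_i · g_i^{k_i})^{(s_i)} = n! · (Π_{i=1}^r f_i) · Π_{i=1}^r (g_i')^{s_i}, where the sum ranges over all r-tuples of nonnegative integers k = (k₁,…,k_r) with |k| = n and h^{(m)} denotes the m-th derivative of h. -/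
/-!
Differentiating the `a`-th factor `f a * g a ^ k a` once gives `f a' * g a ^ k a` plus
`k a * (f a * g a') * g a ^ (k a - 1)`. As `k a * multinomial k = (n + 1) * multinomial (k - eₐ)`
for `|k| = n + 1`, the second part reassembles into `n + 1` times a sum of the same shape with
exponent `n`; in both parts the total order `∑ s i` of differentiation drops by one. Without
derivatives the multinomial theorem gives `(∏ f i) * (∑ g i) ^ n`, which vanishes for `n > 0`.
Hence by induction on `∑ s i` the sum vanishes when `∑ s i < n`, and when `∑ s i = n` only the
second part survives at each step, producing `n! * ∏ f i * ∏ (g i') ^ s i`.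
-/

open Finset Nat

variable {ι : Type*} {𝕜 : Type*} [NontriviallyNormedField 𝕜]

theorem exists_eq_add_one_of_sum_eq_add_one [Fintype ι] {s : ι → ℕ} {m : ℕ}
    (hs : ∑ i, s i = m + 1) : ∃ a p, s a = p + 1 := by
  obtain ⟨a, -, ha⟩ := exists_ne_zero_of_sum_ne_zero (hs.trans_ne m.succ_ne_zero)
  exact ⟨a, _, (succ_pred_eq_of_ne_zero ha).symm⟩

theorem contDiff_apply_update [DecidableEq ι] {s : ι → ℕ} {f : ι → 𝕜 → 𝕜}
    (hf : ∀ i, ContDiff 𝕜 (s i) (f i)) (a : ι) {p : ℕ} {u : 𝕜 → 𝕜} (hu : ContDiff 𝕜 p u) :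
    ∀ i, ContDiff 𝕜 (Function.update s a p i) (Function.update f a u i) := by
  intro i
  rcases eq_or_ne i a with rfl | h
  · simpa using hu
  · simpa [h] using hf i

theorem iteratedDeriv_succ_mul_pow {p k : ℕ} {u v : 𝕜 → 𝕜} (hu : ContDiff 𝕜 (p + 1) u)
    (hv : ContDiff 𝕜 (p + 1) v) (x : 𝕜) :
    iteratedDeriv (p + 1) (fun t => u t * v t ^ k) x =
      iteratedDeriv p (fun t => deriv u t * v t ^ k) x +
        k * iteratedDeriv p (fun t => u t * deriv v t * v t ^ (k - 1)) x := by
  have hu' : ContDiff 𝕜 p (deriv u) := hu.deriv'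
  have hv' : ContDiff 𝕜 p (deriv v) := hv.deriv'
  have hderiv : deriv (fun t => u t * v t ^ k) =
      (fun t => deriv u t * v t ^ k) + fun t => (k : 𝕜) * (u t * deriv v t * v t ^ (k - 1)) := by
    ext t
    rw [Pi.add_apply, deriv_fun_mul (hu.differentiable (by simp)).differentiableAt
      ((hv.differentiable (by simp)).differentiableAt.fun_pow k),
      deriv_fun_pow (hv.differentiable (by simp)).differentiableAt k]
    ring
  have hvp : ContDiff 𝕜 p v := hv.of_succ
  have hup : ContDiff 𝕜 p u := hu.of_succ
  rw [iteratedDeriv_succ', hderiv, iteratedDeriv_add (hu'.mul (hvp.pow k)).contDiffAt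
    (contDiff_const.mul ((hup.mul hv').mul (hvp.pow _))).contDiffAt,
    iteratedDeriv_const_mul _ ((hup.mul hv').mul (hvp.pow _)).contDiffAt]

variable [Fintype ι] [DecidableEq ι]

theorem sum_update_add_one {s : ι → ℕ} {a : ι} {p : ℕ} (hs : s a = p + 1) :
    ∑ i, Function.update s a p i + 1 = ∑ i, s i := by
  rw [sum_update_of_mem (mem_univ a), sum_eq_add_sum_sdiff_singleton_of_mem (mem_univ a), hs]
  ring

theorem Nat.succ_mul_multinomial_add_single (k : ι → ℕ) (a : ι) :
    (k a + 1) * multinomial univ (k + Pi.single a 1) = (∑ i, k i + 1) * multinomial univ k := by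
  have hupdate : k + Pi.single a 1 = Function.update k a (k a + 1) := by
    ext i; rcases eq_or_ne i a with rfl | h <;> simp [*]
  have hfact : ∏ i, ((k + Pi.single a 1 : ι → ℕ) i)! = (k a + 1) * ∏ i, (k i)! := by
    simp only [hupdate, Function.apply_update (fun _ m => m !), prod_update_of_mem (mem_univ a),
      prod_eq_mul_prod_sdiff_singleton_of_mem (mem_univ a) (fun i => (k i)!), factorial_succ]
    ring
  have hsum : ∑ i, (k + Pi.single a 1 : ι → ℕ) i = ∑ i, k i + 1 := by
    simp [Finset.sum_add_distrib]
  refine Nat.eq_of_mul_eq_mul_left (prod_pos fun i (_ : i ∈ univ) => factorial_pos (k i)) ?_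
  calc (∏ i, (k i)!) * ((k a + 1) * multinomial univ (k + Pi.single a 1))
      = (∏ i, ((k + Pi.single a 1 : ι → ℕ) i)!) * multinomial univ (k + Pi.single a 1) := by
        rw [hfact]; ring
    _ = (∑ i, k i + 1)! := by rw [multinomial_spec, hsum]
    _ = (∏ i, (k i)!) * ((∑ i, k i + 1) * multinomial univ k) := by
        rw [factorial_succ, ← multinomial_spec]; ring

theorem Finset.sum_piAntidiag_succ_multinomial_mul {R : Type*} [CommSemiring R] (a : ι) (n : ℕ)
    (F : (ι → ℕ) → R) :
    ∑ k ∈ piAntidiag univ (n + 1), (multinomial univ k * k a : R) * F (k - Pi.single a 1)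
      = (n + 1) * ∑ k ∈ piAntidiag univ n, (multinomial univ k : R) * F k := by
  have hshift : (piAntidiag univ n).map (addRightEmbedding (Pi.single a 1)) ⊆
      piAntidiag univ (n + 1) := by
    intro k hk
    obtain ⟨k, hk, rfl⟩ := mem_map.1 hk
    simp_all [sum_add_distrib]
  have hvanish : ∀ k ∈ piAntidiag univ (n + 1),
      k ∉ (piAntidiag univ n).map (addRightEmbedding (Pi.single a 1)) →
      (multinomial univ k * k a : R) * F (k - Pi.single a 1) = 0 := by
    intro k hk hnot
    suffices k a = 0 by simp [this]
    by_contra hka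
    have hk' : k - Pi.single a 1 + Pi.single a 1 = k := by
      ext i; rcases eq_or_ne i a with rfl | h <;> simp [*]; omega
    refine hnot (mem_map.2 ⟨k - Pi.single a 1, ?_, hk'⟩)
    rw [← hk'] at hk
    simpa [sum_add_distrib] using hk
  rw [← sum_subset hshift hvanish, sum_map, mul_sum]
  refine sum_congr rfl fun k hk => ?_
  have hcoef := Nat.succ_mul_multinomial_add_single k a
  rw [(mem_piAntidiag.1 hk).1] at hcoef
  simp only [addRightEmbedding_apply, add_tsub_cancel_right, Pi.add_apply, Pi.single_eq_same]
  rw [← mul_assoc]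
  congr 1
  exact_mod_cast congrArg (Nat.cast : ℕ → R) ((mul_comm _ _).trans hcoef)

theorem Fintype.prod_eq_add_mul_prod_of_ne {M : Type*} [CommSemiring M] {X Y Z : ι → M} (a : ι)
    (c : M) (ha : X a = Y a + c * Z a) (hY : ∀ i ≠ a, Y i = X i) (hZ : ∀ i ≠ a, Z i = X i) :
    ∏ i, X i = ∏ i, Y i + c * ∏ i, Z i := by
  have hrest : ∀ W : ι → M, (∀ i ≠ a, W i = X i) →
      ∏ i ∈ univ \ {a}, W i = ∏ i ∈ univ \ {a}, X i :=
    fun W hW => Finset.prod_congr rfl fun i hi => hW i (by simpa using hi)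
  simp only [prod_eq_mul_prod_sdiff_singleton_of_mem (mem_univ a), hrest Y hY, hrest Z hZ, ha]
  ring

noncomputable def multinomialDerivSum (n : ℕ) (f g : ι → 𝕜 → 𝕜) (s : ι → ℕ) (x : 𝕜) : 𝕜 :=
  ∑ k ∈ piAntidiag univ n,
    (multinomial univ k : 𝕜) * ∏ i, iteratedDeriv (s i) (fun t => f i t * g i t ^ k i) x

theorem multinomialDerivSum_zero_right (n : ℕ) (f g : ι → 𝕜 → 𝕜) (x : 𝕜) :
    multinomialDerivSum n f g 0 x = (∏ i, f i x) * (∑ i, g i x) ^ n := by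
  simp only [multinomialDerivSum, Pi.zero_apply, iteratedDeriv_zero, prod_mul_distrib,
    sum_pow_eq_sum_piAntidiag, mul_sum]
  exact sum_congr rfl fun k _ => by ring

theorem multinomialDerivSum_succ {n p : ℕ} {f g : ι → 𝕜 → 𝕜} {s : ι → ℕ} {a : ι}
    (hs : s a = p + 1) (hf : ContDiff 𝕜 (p + 1) (f a)) (hg : ContDiff 𝕜 (p + 1) (g a)) (x : 𝕜) :
    multinomialDerivSum (n + 1) f g s x =
      multinomialDerivSum (n + 1) (Function.update f a (deriv (f a))) g (Function.update s a p) x +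
        (n + 1) * multinomialDerivSum n (Function.update f a fun t => f a t * deriv (g a) t) g
          (Function.update s a p) x := by
  have hterm : ∀ k : ι → ℕ,
      ∏ i, iteratedDeriv (s i) (fun t => f i t * g i t ^ k i) x =
        ∏ i, iteratedDeriv (Function.update s a p i)
          (fun t => Function.update f a (deriv (f a)) i t * g i t ^ k i) x +
        k a * ∏ i, iteratedDeriv (Function.update s a p i)
          (fun t => Function.update f a (fun t => f a t * deriv (g a) t) i t *
            g i t ^ (k - Pi.single a 1 : ι → ℕ) i) x := by
    intro k
    refine Fintype.prod_eq_add_mul_prod_of_ne a _ ?_ (fun i hi => ?_) (fun i hi => ?_)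
    · simp only [Function.update_self, Pi.sub_apply, Pi.single_eq_same, hs,
        iteratedDeriv_succ_mul_pow hf hg]
    · simp [hi]
    · simp [hi]
  simp only [multinomialDerivSum, hterm, mul_add, sum_add_distrib, ← mul_assoc]
  exact congrArg _ (sum_piAntidiag_succ_multinomial_mul a n fun k => ∏ i,
    iteratedDeriv (Function.update s a p i)
      (fun t => Function.update f a (fun t => f a t * deriv (g a) t) i t * g i t ^ k i) x)

theorem multinomialDerivSum_eq_zero {n : ℕ} {f g : ι → 𝕜 → 𝕜} {s : ι → ℕ}
    (hf : ∀ i, ContDiff 𝕜 (s i) (f i)) (hg : ∀ i, ContDiff 𝕜 (s i) (g i))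
    (hsum : ∀ x, ∑ i, g i x = 0) (hs : ∑ i, s i < n) (x : 𝕜) :
    multinomialDerivSum n f g s x = 0 := by
  induction hm : ∑ i, s i generalizing n f s with
  | zero =>
    obtain rfl : s = 0 := funext fun i => sum_eq_zero_iff.1 hm i (mem_univ i)
    rw [multinomialDerivSum_zero_right, hsum, zero_pow (by omega), mul_zero]
  | succ m ih =>
    obtain ⟨a, p, hp⟩ := exists_eq_add_one_of_sum_eq_add_one hm
    obtain ⟨n, rfl⟩ := exists_eq_add_one_of_ne_zero (by omega : n ≠ 0)
    have hs' : ∑ i, Function.update s a p i = m := by have := sum_update_add_one hp; omega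
    have hfa := hp ▸ hf a
    have hga := hp ▸ hg a
    have hg' : ∀ i, ContDiff 𝕜 (Function.update s a p i) (g i) := by
      simpa using contDiff_apply_update hg a hga.of_succ
    rw [multinomialDerivSum_succ hp hfa hga,
      ih (contDiff_apply_update hf a hfa.deriv') hg' (by omega) hs',
      ih (contDiff_apply_update hf a (hfa.of_succ.mul hga.deriv')) hg' (by omega) hs']
    ring

theorem multinomialDerivSum_eq_factorial_mul {n : ℕ} {f g : ι → 𝕜 → 𝕜} {s : ι → ℕ}
    (hf : ∀ i, ContDiff 𝕜 (s i) (f i)) (hg : ∀ i, ContDiff 𝕜 (s i) (g i))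
    (hsum : ∀ x, ∑ i, g i x = 0) (hs : ∑ i, s i = n) (x : 𝕜) :
    multinomialDerivSum n f g s x = n ! * (∏ i, f i x) * ∏ i, deriv (g i) x ^ s i := by
  induction n generalizing f s with
  | zero =>
    obtain rfl : s = 0 := funext fun i => sum_eq_zero_iff.1 hs i (mem_univ i)
    simp [multinomialDerivSum_zero_right]
  | succ n ih =>
    obtain ⟨a, p, hp⟩ := exists_eq_add_one_of_sum_eq_add_one hs
    have hs' : ∑ i, Function.update s a p i = n := by have := sum_update_add_one hp; omega
    have hfa := hp ▸ hf a
    have hga := hp ▸ hg a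
    have hg' : ∀ i, ContDiff 𝕜 (Function.update s a p i) (g i) := by
      simpa using contDiff_apply_update hg a hga.of_succ
    rw [multinomialDerivSum_succ hp hfa hga,
      multinomialDerivSum_eq_zero (contDiff_apply_update hf a hfa.deriv') hg' hsum (by omega),
      ih (contDiff_apply_update hf a (hfa.of_succ.mul hga.deriv')) hg' hs']
    simp only [Function.apply_update (fun _ (u : 𝕜 → 𝕜) => u x),
      Function.apply_update (fun i m => deriv (g i) x ^ m), prod_update_of_mem (mem_univ a),
      prod_eq_mul_prod_sdiff_singleton_of_mem (mem_univ a) (fun i => f i x),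
      prod_eq_mul_prod_sdiff_singleton_of_mem (mem_univ a) (fun i => deriv (g i) x ^ s i), hp,
      factorial_succ]
    push_cast
    ring

theorem stmt_0_general (n r : ℕ)
    (f g : Fin r → ℝ → ℝ)
    (hf : ∀ i, ContDiff ℝ (n : ℕ∞) (f i))
    (hg : ∀ i, ContDiff ℝ (n : ℕ∞) (g i))
    (hsum : ∀ x : ℝ, ∑ i, g i x = 0)
    (s : Fin r → ℕ) (hs : ∑ i, s i = n) (x : ℝ) :
    ∑ k ∈ Finset.Nat.antidiagonalTuple r n,
      (Nat.multinomial Finset.univ k : ℝ) *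
        ∏ i, iteratedDeriv (s i) (fun t => f i t * (g i t) ^ (k i)) x
      = (n.factorial : ℝ) * (∏ i, f i x) * ∏ i, (deriv (g i) x) ^ (s i) := by
  have hsn : ∀ i, (s i : WithTop ℕ∞) ≤ (n : ℕ∞) := fun i => by
    exact_mod_cast hs ▸ single_le_sum (fun j _ => Nat.zero_le (s j)) (mem_univ i)
  rw [← piAntidiag_univ_fin_eq_antidiagonalTuple]
  exact multinomialDerivSum_eq_factorial_mul (fun i => (hf i).of_le (hsn i))
    (fun i => (hg i).of_le (hsn i)) hsum hs x

theorem stmt_0 (n r : ℕ) (hr : 1 ≤ r)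
    (f g : Fin r → ℝ → ℝ)
    (hf : ∀ i, ContDiff ℝ (n : ℕ∞) (f i))
    (hg : ∀ i, ContDiff ℝ (n : ℕ∞) (g i))
    (hsum : ∀ x : ℝ, ∑ i, g i x = 0)
    (s : Fin r → ℕ) (hs : ∑ i, s i = n) (x : ℝ) :
    ∑ k ∈ Finset.Nat.antidiagonalTuple r n,
      (Nat.multinomial Finset.univ k : ℝ) *
        ∏ i, iteratedDeriv (s i) (fun t => f i t * (g i t) ^ (k i)) x
      = (n.factorial : ℝ) * (∏ i, f i x) * ∏ i, (deriv (g i) x) ^ (s i) :=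
  stmt_0_general n r f g hf hg hsum s hs x
end

section
/- Let n ∈ ℕ, r ∈ ℕ with r ≥ 1, and let f₁,…,f_r and g₁,…,g_r be real-valued functions on ℝ, each n times differentiable. Suppose Σ_{i=1}^r g_i = 0 (identically). Then for every multi-index s = (s₁,…,s_r) of nonnegative integers with s₁+⋯+s_r < n, one has Σ_{k₁+⋯+k_r = n} (n! / (k₁!⋯k_r!)) · Π_{i=1}^r (f_i · g_i^{k_i})^{(s_i)} = 0, where the sum ranges over all r-tuples of nonnegative integers k = (k₁,…,k_r) with |k| = n and h^{(m)} denotes the m-th derivative of h. -/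
/-!
Fix `c ∈ ℝ^r` and restrict to the line `t ↦ x + c t`. By the multinomial theorem,
`Φ(t) = ∏ᵢ fᵢ(x + cᵢ t) · (∑ᵢ gᵢ(x + cᵢ t))ⁿ = ∑_{|k|=n} (n choose k) ∏ᵢ (fᵢ gᵢ^{kᵢ})(x + cᵢ t)`,
and by the Leibniz rule for finite products its `m`-th derivative at `0`, `m = |s|`, is
`∑_{|u|=m} (m choose u) T(u) cᵘ`, where `T(u)` is the sum of the theorem with `s` replaced by `u`.
Since `∑ᵢ gᵢ(x) = 0`, `Φ` is a product with an `n`-th power of a function vanishing at `0`, so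
this derivative is zero for every `c`; a polynomial vanishing on all of `ℝ^r` has zero
coefficients, whence `T(s) = 0`.
-/

open scoped BigOperators
open Finset

section Leibniz

variable {𝕜 𝔸 : Type*} [NontriviallyNormedField 𝕜] [NormedCommRing 𝔸] [NormedAlgebra 𝕜 𝔸]

theorem iteratedDeriv_finset_prod {ι : Type*} [DecidableEq ι] (u : Finset ι) (h : ι → 𝕜 → 𝔸)
    (m : ℕ) (x : 𝕜) (hh : ∀ i ∈ u, ContDiffAt 𝕜 m (h i) x) :
    iteratedDeriv m (fun t => ∏ i ∈ u, h i t) x =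
      ∑ v ∈ u.piAntidiag m, Nat.multinomial u v * ∏ i ∈ u, iteratedDeriv (v i) (h i) x := by
  induction u using Finset.cons_induction generalizing m with
  | empty => cases m <;> simp [iteratedDeriv_const]
  | cons a u ha ih =>
    rw [forall_mem_cons] at hh
    simp only [prod_cons]
    rw [iteratedDeriv_fun_mul hh.1 (contDiffAt_prod hh.2), piAntidiag_cons, sum_disjiUnion,
      ← Nat.sum_antidiagonal_eq_sum_range_succ fun j l => (m.choose j : 𝔸) *
        iteratedDeriv j (h a) x * iteratedDeriv l (fun t => ∏ i ∈ u, h i t) x]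
    refine sum_congr rfl fun p hp => ?_
    rw [HasAntidiagonal.mem_antidiagonal] at hp
    rw [ih p.2 fun i hi => (hh.2 i hi).of_le (by exact_mod_cast hp ▸ Nat.le_add_left _ _),
      sum_map, mul_sum]
    refine sum_congr rfl fun v hv => ?_
    rw [mem_piAntidiag] at hv
    have hva : v a = 0 := by_contra fun h' => ha (hv.2 a h')
    rw [addRightEmbedding_apply]
    set w : ι → ℕ := v + fun t => if t = a then p.1 else 0
    have hwa : w a = p.1 := by simp [w, hva]
    have hwu : ∀ i ∈ u, w i = v i := fun i hi => by
      simp [w, ne_of_mem_of_not_mem hi ha]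
    rw [Nat.multinomial_cons, hwa, sum_congr rfl hwu, Nat.multinomial_congr hwu, hv.1, hp,
      prod_congr rfl fun i hi => congrArg (iteratedDeriv · (h i) x) (hwu i hi)]
    push_cast
    ring

theorem iteratedDeriv_pow_eq_zero_of_lt {B : 𝕜 → 𝔸} {x : 𝕜} {l n : ℕ}
    (hB : ContDiffAt 𝕜 l B x) (hB0 : B x = 0) (hl : l < n) :
    iteratedDeriv l (fun t => B t ^ n) x = 0 := by
  classical
  have hprod : (fun t => B t ^ n) = fun t => ∏ _i ∈ range n, B t := by simp
  rw [hprod, iteratedDeriv_finset_prod _ _ _ _ fun _ _ => hB]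
  refine sum_eq_zero fun v hv => ?_
  rw [mem_piAntidiag] at hv
  -- `n` nonnegative integers summing to `l < n` cannot all be positive
  obtain ⟨i, hi, hvi⟩ : ∃ i ∈ range n, v i = 0 := by
    by_contra! hpos
    have : ∑ _i ∈ range n, 1 ≤ ∑ i ∈ range n, v i :=
      sum_le_sum fun i hi => Nat.one_le_iff_ne_zero.2 (hpos i hi)
    simp only [sum_const, card_range, smul_eq_mul, mul_one, hv.1] at this
    omega
  rw [prod_eq_zero hi (by simp [hvi, hB0]), mul_zero]

theorem iteratedDeriv_mul_pow_eq_zero_of_lt {A B : 𝕜 → 𝔸} {x : 𝕜} {m n : ℕ}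
    (hA : ContDiffAt 𝕜 m A x) (hB : ContDiffAt 𝕜 m B x) (hB0 : B x = 0) (hm : m < n) :
    iteratedDeriv m (fun t => A t * B t ^ n) x = 0 := by
  rw [iteratedDeriv_fun_mul hA (hB.pow n)]
  refine sum_eq_zero fun j hj => ?_
  rw [iteratedDeriv_pow_eq_zero_of_lt (hB.of_le (by exact_mod_cast m.sub_le j)) hB0 (by omega),
    mul_zero]

end Leibniz

section Line

variable {𝕜 : Type*} [NontriviallyNormedField 𝕜]

theorem ContDiff.comp_line {F : Type*} [NormedAddCommGroup F] [NormedSpace 𝕜 F] {h : 𝕜 → F}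
    {m : ℕ} (hh : ContDiff 𝕜 m h) (x c : 𝕜) : ContDiff 𝕜 m fun t => h (x + c * t) :=
  hh.comp (contDiff_const.add (contDiff_const.mul contDiff_id))

theorem iteratedDeriv_comp_line {h : 𝕜 → 𝕜} {m : ℕ} (hh : ContDiff 𝕜 m h) (x c : 𝕜) :
    iteratedDeriv m (fun t => h (x + c * t)) 0 = c ^ m * iteratedDeriv m h x := by
  have hshift : ContDiff 𝕜 m fun t => h (x + t) := hh.comp (contDiff_const.add contDiff_id)
  rw [iteratedDeriv_comp_const_mul hshift c, iteratedDeriv_comp_const_add]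
  simp

theorem iteratedDeriv_prod_comp_line {ι : Type*} [DecidableEq ι] (u : Finset ι) {h : ι → 𝕜 → 𝕜}
    {m : ℕ} (hh : ∀ i ∈ u, ContDiff 𝕜 m (h i)) (x : 𝕜) (c : ι → 𝕜) :
    iteratedDeriv m (fun t => ∏ i ∈ u, h i (x + c i * t)) 0 =
      ∑ v ∈ u.piAntidiag m, Nat.multinomial u v *
        ∏ i ∈ u, (c i ^ v i * iteratedDeriv (v i) (h i) x) := by
  rw [iteratedDeriv_finset_prod u _ m 0 fun i hi => ((hh i hi).comp_line x (c i)).contDiffAt]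
  refine sum_congr rfl fun v hv => ?_
  rw [mem_piAntidiag] at hv
  refine congrArg _ <| prod_congr rfl fun i hi =>
    iteratedDeriv_comp_line ((hh i hi).of_le ?_) x (c i)
  exact_mod_cast hv.1 ▸ single_le_sum (fun _ _ => Nat.zero_le _) hi

theorem iteratedDeriv_sum_prod_comp_line {ι κ : Type*} [DecidableEq ι] (u : Finset ι)
    (K : Finset κ) (w : κ → 𝕜) {H : κ → ι → 𝕜 → 𝕜} {m : ℕ}
    (hH : ∀ k ∈ K, ∀ i ∈ u, ContDiff 𝕜 m (H k i)) (x : 𝕜) (c : ι → 𝕜) :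
    iteratedDeriv m (fun t => ∑ k ∈ K, w k * ∏ i ∈ u, H k i (x + c i * t)) 0 =
      ∑ v ∈ u.piAntidiag m, (Nat.multinomial u v *
        ∑ k ∈ K, w k * ∏ i ∈ u, iteratedDeriv (v i) (H k i) x) * ∏ i ∈ u, c i ^ v i := by
  have hsmooth : ∀ k ∈ K, ContDiffAt 𝕜 m (fun t => w k * ∏ i ∈ u, H k i (x + c i * t)) 0 :=
    fun k hk => (contDiff_const.mul (contDiff_prod fun i hi =>
      (hH k hk i hi).comp_line x (c i))).contDiffAt
  rw [iteratedDeriv_fun_sum hsmooth, sum_congr rfl fun k hk => by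
    rw [iteratedDeriv_const_mul_field, iteratedDeriv_prod_comp_line u (hH k hk)]]
  simp only [mul_sum, sum_mul, prod_mul_distrib]
  rw [sum_comm]
  refine sum_congr rfl fun v _ => sum_congr rfl fun k _ => by ring

end Line

theorem eq_zero_of_forall_sum_mul_prod_pow_eq_zero {R σ : Type*} [CommRing R] [IsDomain R]
    [Infinite R] [Fintype σ] {S : Finset (σ → ℕ)} {a : (σ → ℕ) → R}
    (h : ∀ c : σ → R, ∑ v ∈ S, a v * ∏ i, c i ^ v i = 0) {u : σ → ℕ} (hu : u ∈ S) :
    a u = 0 := by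
  classical
  set P : MvPolynomial σ R :=
    ∑ v ∈ S, MvPolynomial.monomial (Finsupp.equivFunOnFinite.symm v) (a v)
  have hP : P = 0 := MvPolynomial.funext fun c => by
    simp [P, MvPolynomial.eval_monomial, Finsupp.prod_fintype, h c]
  have hcoeff : P.coeff (Finsupp.equivFunOnFinite.symm u) = a u := by
    simp only [P, MvPolynomial.coeff_sum, MvPolynomial.coeff_monomial,
      (Finsupp.equivFunOnFinite.symm.injective).eq_iff, sum_ite_eq', if_pos hu]
  rw [← hcoeff, hP, MvPolynomial.coeff_zero]

theorem stmt_1_general (n r : ℕ)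
    (f g : Fin r → ℝ → ℝ)
    (hf : ∀ i, ContDiff ℝ (n : ℕ∞) (f i))
    (hg : ∀ i, ContDiff ℝ (n : ℕ∞) (g i))
    (hsum : ∀ x : ℝ, ∑ i, g i x = 0)
    (s : Fin r → ℕ) (hs : ∑ i, s i < n) (x : ℝ) :
    ∑ k ∈ Finset.Nat.antidiagonalTuple r n,
      (Nat.multinomial Finset.univ k : ℝ) *
        ∏ i, iteratedDeriv (s i) (fun t => f i t * (g i t) ^ (k i)) x
      = 0 := by
  classical
  set m := ∑ i, s i
  have hf' : ∀ i, ContDiff ℝ m (f i) := fun i => (hf i).of_le (by exact_mod_cast hs.le)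
  have hg' : ∀ i, ContDiff ℝ m (g i) := fun i => (hg i).of_le (by exact_mod_cast hs.le)
  have hline : ∀ c : Fin r → ℝ, ∑ u ∈ univ.piAntidiag m, (Nat.multinomial univ u *
      ∑ k ∈ univ.piAntidiag n, Nat.multinomial univ k *
        ∏ i, iteratedDeriv (u i) (fun t => f i t * g i t ^ k i) x) * ∏ i, c i ^ u i = 0 := by
    intro c
    rw [← iteratedDeriv_sum_prod_comp_line _ _ _ (fun k _ i _ => (hf' i).mul ((hg' i).pow _))]
    have hexpand : (fun t => ∑ k ∈ univ.piAntidiag n, (Nat.multinomial univ k : ℝ) *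
        ∏ i, (f i (x + c i * t) * g i (x + c i * t) ^ k i)) =
        fun t => (∏ i, f i (x + c i * t)) * (∑ i, g i (x + c i * t)) ^ n := by
      ext t
      rw [sum_pow_eq_sum_piAntidiag, mul_sum]
      exact sum_congr rfl fun k _ => by rw [prod_mul_distrib]; ring
    rw [hexpand]
    exact iteratedDeriv_mul_pow_eq_zero_of_lt
      (contDiff_prod fun i _ => (hf' i).comp_line x (c i)).contDiffAt
      (ContDiff.sum fun i _ => (hg' i).comp_line x (c i)).contDiffAt (by simpa using hsum x) hs
  have hcoeff := eq_zero_of_forall_sum_mul_prod_pow_eq_zero hline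
    (mem_piAntidiag.2 ⟨rfl, fun i _ => mem_univ i⟩)
  rw [← piAntidiag_univ_fin_eq_antidiagonalTuple]
  exact (mul_eq_zero.1 hcoeff).resolve_left (Nat.cast_ne_zero.2 (Nat.multinomial_pos _ _).ne')

theorem stmt_1 (n r : ℕ) (hr : 1 ≤ r)
    (f g : Fin r → ℝ → ℝ)
    (hf : ∀ i, ContDiff ℝ (n : ℕ∞) (f i))
    (hg : ∀ i, ContDiff ℝ (n : ℕ∞) (g i))
    (hsum : ∀ x : ℝ, ∑ i, g i x = 0)
    (s : Fin r → ℕ) (hs : ∑ i, s i < n) (x : ℝ) :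
    ∑ k ∈ Finset.Nat.antidiagonalTuple r n,
      (Nat.multinomial Finset.univ k : ℝ) *
        ∏ i, iteratedDeriv (s i) (fun t => f i t * (g i t) ^ (k i)) x
      = 0 :=
  stmt_1_general n r f g hf hg hsum s hs x
end

section
/- Let n ∈ ℕ, r ∈ ℕ with r ≥ 1, let f₁,…,f_r and g be real-valued functions on ℝ, each n times differentiable, and let c = (c₁,…,c_r) ∈ ℝ^r with c₁+⋯+c_r = 0. Then for every multi-index s = (s₁,…,s_r) of nonnegative integers with s₁+⋯+s_r = n, one has Σ_{k₁+⋯+k_r = n} (n!/(k₁!⋯k_r!)) · Π_{i=1}^r c_i^{k_i} · (f_i · g^{k_i})^{(s_i)} = n! · (Π_{i=1}^r c_i^{s_i}) · (Π_{i=1}^r f_i) · (g')^{n}. -/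
/-!
Put `a i = g i x`, so that `∑ i, a i = 0`, and expand `g i ^ k = ((g i - a i) + a i) ^ k`
binomially. As `g i - a i` vanishes at `x`, the `m`-th derivative of `f i * (g i - a i) ^ j`
at `x` is `0` for `j > m` and `m! * f i x * (g i)' x ^ m` for `j = m`. Collecting terms,
a tuple of exponents `p ≤ s` comes with the coefficient
`∑ k, multinomial k * ∏ i, C(k i, p i) * a i ^ (k i - p i)`. This is a Taylor coefficient of
`(∑ i, y i) ^ n` at `y = a`, namely `C(n, |p|) * multinomial p * (∑ i, a i) ^ (n - |p|)`, so it
vanishes unless `|p| = n`, i.e. `p = s`. The theorem is the case `g i = c i * g`.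
-/

open Finset Nat

section IteratedDeriv

variable {𝕜 : Type*} [NontriviallyNormedField 𝕜]

theorem deriv_mul_pow_succ {f h : 𝕜 → 𝕜} (hf : Differentiable 𝕜 f) (hh : Differentiable 𝕜 h)
    (j : ℕ) :
    deriv (fun t => f t * h t ^ (j + 1)) =
      fun t => (deriv f t * h t + (j + 1) * f t * deriv h t) * h t ^ j := by
  funext t
  rw [deriv_fun_mul (hf t) ((hh t).fun_pow _), deriv_fun_pow (hh t), Nat.add_sub_cancel]
  push_cast
  ring

theorem iteratedDeriv_mul_pow_of_le {f h : 𝕜 → 𝕜} {x : 𝕜} {m j : ℕ} (hx : h x = 0) (hmj : m ≤ j)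
    (hf : ContDiff 𝕜 m f) (hh : ContDiff 𝕜 m h) :
    iteratedDeriv m (fun t => f t * h t ^ j) x =
      if m = j then m ! * f x * deriv h x ^ m else 0 := by
  induction m generalizing j f with
  | zero =>
    rcases j with _ | j
    · simp
    · simp [hx]
  | succ m ih =>
    obtain ⟨j, rfl⟩ : ∃ j', j = j' + 1 := ⟨j - 1, by omega⟩
    have hm : ContDiff 𝕜 m h := hh.of_le (by exact_mod_cast m.le_succ)
    rw [iteratedDeriv_succ', deriv_mul_pow_succ (hf.differentiable (by simp))
      (hh.differentiable (by simp)), ih (by omega)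
      ((hf.deriv'.mul hm).add ((contDiff_const.mul (hf.of_le (by exact_mod_cast m.le_succ))).mul
        hh.deriv')) hm]
    simp only [hx, Nat.add_right_cancel_iff, factorial_succ]
    split_ifs with hmj
    · subst hmj; push_cast; ring
    · rfl

theorem iteratedDeriv_mul_pow_eq_sum {f g : 𝕜 → 𝕜} {m : ℕ} (hf : ContDiff 𝕜 m f)
    (hg : ContDiff 𝕜 m g) (k : ℕ) (x : 𝕜) :
    iteratedDeriv m (fun t => f t * g t ^ k) x =
      ∑ j ∈ range (m + 1), (k.choose j : 𝕜) * g x ^ (k - j) *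
        iteratedDeriv m (fun t => f t * (g t - g x) ^ j) x := by
  have hexpand : (fun t => f t * g t ^ k) = fun t => ∑ j ∈ range (k + m + 1),
      ((k.choose j : 𝕜) * g x ^ (k - j)) * (f t * (g t - g x) ^ j) := by
    funext t
    rw [← sub_add_cancel (g t) (g x), add_pow, mul_sum, sub_add_cancel,
      sum_subset (range_subset_range.mpr (by omega : k + 1 ≤ k + m + 1))]
    · exact sum_congr rfl fun j _ => by ring
    · intro j _ hj
      rw [choose_eq_zero_of_lt (by simpa using hj)]
      simp
  rw [hexpand, iteratedDeriv_fun_sum,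
    ← sum_subset (range_subset_range.mpr (by omega : m + 1 ≤ k + m + 1))]
  · refine sum_congr rfl fun j _ => ?_
    rw [iteratedDeriv_const_mul_field]
  · intro j _ hj
    rw [iteratedDeriv_const_mul_field, iteratedDeriv_mul_pow_of_le (sub_self _)
      (by simp at hj; omega) hf (hg.sub contDiff_const), if_neg (by simp at hj; omega), mul_zero]
  · intro j _
    exact (contDiff_const.mul (hf.mul ((hg.sub contDiff_const).pow j))).contDiffAt

theorem iteratedDeriv_mul_sub_pow_self {f g : 𝕜 → 𝕜} {m : ℕ} (hf : ContDiff 𝕜 m f)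
    (hg : ContDiff 𝕜 m g) (x : 𝕜) :
    iteratedDeriv m (fun t => f t * (g t - g x) ^ m) x = m ! * (f x * deriv g x ^ m) := by
  rw [iteratedDeriv_mul_pow_of_le (h := fun t => g t - g x) (sub_self _) le_rfl hf
    (hg.sub contDiff_const), if_pos rfl, deriv_sub_const, mul_assoc]

end IteratedDeriv

section Multinomial

variable {ι : Type*}

theorem Nat.multinomial_add_mul_prod_choose (s : Finset ι) (p l : ι → ℕ) :
    multinomial s (p + l) * ∏ i ∈ s, (p i + l i).choose (p i) =
      (∑ i ∈ s, p i + ∑ i ∈ s, l i).choose (∑ i ∈ s, p i) * multinomial s p *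
        multinomial s l := by
  have hchoose (a b : ℕ) : (a + b).choose a * a ! * b ! = (a + b)! := by
    rw [choose_symm_add, add_choose_mul_factorial_mul_factorial]
  refine Nat.eq_of_mul_eq_mul_right (mul_pos (prod_pos fun i (_ : i ∈ s) => factorial_pos (p i))
    (prod_pos fun i (_ : i ∈ s) => factorial_pos (l i))) ?_
  calc (multinomial s (p + l) * ∏ i ∈ s, (p i + l i).choose (p i)) *
        ((∏ i ∈ s, (p i)!) * ∏ i ∈ s, (l i)!)
      = (∏ i ∈ s, ((p i + l i).choose (p i) * (p i)! * (l i)!)) * multinomial s (p + l) := by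
        rw [prod_mul_distrib, prod_mul_distrib]; ring
    _ = (∑ i ∈ s, p i + ∑ i ∈ s, l i)! := by
        simp only [hchoose]
        rw [← sum_add_distrib]
        exact multinomial_spec s (p + l)
    _ = _ := by
        rw [← hchoose, ← multinomial_spec s p, ← multinomial_spec s l]; ring

variable [Fintype ι] [DecidableEq ι] {R : Type*} [CommSemiring R]

theorem sum_piAntidiag_multinomial_mul_prod_choose (x : ι → R) {n : ℕ} {p : ι → ℕ}
    (hp : ∑ i, p i ≤ n) :
    ∑ k ∈ piAntidiag univ n, (multinomial univ k : R) *
        ∏ i, (k i).choose (p i) * x i ^ (k i - p i) =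
      (n.choose (∑ i, p i) : R) * multinomial univ p * (∑ i, x i) ^ (n - ∑ i, p i) := by
  have hsub : (piAntidiag univ (n - ∑ i, p i)).map (addLeftEmbedding p) ⊆ piAntidiag univ n := by
    intro k hk
    obtain ⟨l, hl, rfl⟩ := mem_map.mp hk
    simp only [mem_piAntidiag, mem_univ, implies_true, and_true] at hl ⊢
    simp [sum_add_distrib, hl, hp]
  rw [sum_pow_eq_sum_piAntidiag, mul_sum, ← sum_subset hsub, sum_map]
  · refine sum_congr rfl fun l hl => ?_
    have hcoeff := congrArg (Nat.cast (R := R)) (multinomial_add_mul_prod_choose univ p l)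
    rw [(mem_piAntidiag.mp hl).1, Nat.add_sub_cancel' hp] at hcoeff
    push_cast at hcoeff
    simp only [addLeftEmbedding_apply, Pi.add_apply, Nat.add_sub_cancel_left, prod_mul_distrib]
    rw [← mul_assoc, hcoeff]
    ring
  · intro k hk hkp
    obtain ⟨i, hi⟩ : ∃ i, k i < p i := by
      by_contra! hle
      refine hkp (mem_map.mpr ⟨k - p, ?_, funext fun i => Nat.add_sub_cancel' (hle i)⟩)
      simp only [mem_piAntidiag, mem_univ, implies_true, and_true] at hk ⊢
      simp only [Pi.sub_apply, sum_tsub_distrib _ fun i _ => hle i, hk]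
    rw [prod_eq_zero (mem_univ i) (by rw [choose_eq_zero_of_lt hi]; simp), mul_zero]

end Multinomial

theorem sum_piAntidiag_multinomial_mul_prod_iteratedDeriv_mul_pow {ι 𝕜 : Type*} [Fintype ι]
    [DecidableEq ι] [NontriviallyNormedField 𝕜] {f g : ι → 𝕜 → 𝕜} {s : ι → ℕ}
    (hf : ∀ i, ContDiff 𝕜 (s i) (f i)) (hg : ∀ i, ContDiff 𝕜 (s i) (g i)) {x : 𝕜} (hgx : ∑ i, g i x = 0) :
    ∑ k ∈ piAntidiag univ (∑ i, s i), (multinomial univ k : 𝕜) *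
        ∏ i, iteratedDeriv (s i) (fun t => f i t * g i t ^ k i) x =
      (∑ i, s i)! * ∏ i, f i x * deriv (g i) x ^ s i := by
  set n := ∑ i, s i
  set D : ι → ℕ → 𝕜 := fun i j => iteratedDeriv (s i) (fun t => f i t * (g i t - g i x) ^ j) x
  have hexpand (k : ι → ℕ) : ∏ i, iteratedDeriv (s i) (fun t => f i t * g i t ^ k i) x =
      ∑ p ∈ Fintype.piFinset fun i => range (s i + 1),
        (∏ i, (k i).choose (p i) * g i x ^ (k i - p i)) * ∏ i, D i (p i) := by
    simp_rw [iteratedDeriv_mul_pow_eq_sum (hf _) (hg _), prod_univ_sum, prod_mul_distrib]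
    rfl
  have hle {p : ι → ℕ} (hp : p ∈ Fintype.piFinset fun i => range (s i + 1)) (i : ι) :
      p i ≤ s i := by
    simpa [Nat.lt_succ_iff] using Fintype.mem_piFinset.mp hp i
  calc _ = ∑ p ∈ Fintype.piFinset fun i => range (s i + 1),
        (∑ k ∈ piAntidiag univ n, (multinomial univ k : 𝕜) *
          ∏ i, (k i).choose (p i) * g i x ^ (k i - p i)) * ∏ i, D i (p i) := by
        simp_rw [hexpand, mul_sum, sum_mul, mul_assoc]
        exact sum_comm
    _ = ∑ p ∈ Fintype.piFinset fun i => range (s i + 1),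
        (n.choose (∑ i, p i) : 𝕜) * multinomial univ p * 0 ^ (n - ∑ i, p i) *
          ∏ i, D i (p i) := by
        refine sum_congr rfl fun p hp => ?_
        rw [sum_piAntidiag_multinomial_mul_prod_choose _ (sum_le_sum fun i _ => hle hp i), hgx]
    _ = multinomial univ s * ∏ i, D i (s i) := by
        rw [sum_eq_single_of_mem s (Fintype.mem_piFinset.mpr fun i => by simp)]
        · simp [n]
        · intro p hp hps
          have hlt : ∑ i, p i < n := by
            obtain ⟨i, hi⟩ := Function.ne_iff.mp hps
            exact sum_lt_sum (fun i _ => hle hp i) ⟨i, mem_univ i, (hle hp i).lt_of_ne hi⟩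
          rw [zero_pow (by omega), mul_zero, zero_mul]
    _ = _ := by
        rw [prod_congr rfl fun i _ => iteratedDeriv_mul_sub_pow_self (hf i) (hg i) x,
          prod_mul_distrib, ← multinomial_spec univ s]
        push_cast
        ring

theorem stmt_2_general (n r : ℕ)
    (f : Fin r → ℝ → ℝ) (g : ℝ → ℝ)
    (hf : ∀ i, ContDiff ℝ (n : ℕ∞) (f i))
    (hg : ContDiff ℝ (n : ℕ∞) g)
    (c : Fin r → ℝ) (hc : ∑ i, c i = 0)
    (s : Fin r → ℕ) (hs : ∑ i, s i = n) (x : ℝ) :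
    ∑ k ∈ Finset.Nat.antidiagonalTuple r n,
      (Nat.multinomial Finset.univ k : ℝ) *
        ∏ i, (c i) ^ (k i) * iteratedDeriv (s i) (fun t => f i t * (g t) ^ (k i)) x
      = (n.factorial : ℝ) * (∏ i, (c i) ^ (s i)) * (∏ i, f i x) * (deriv g x) ^ n := by
  subst hs
  have hsmooth (i : Fin r) {u : ℝ → ℝ} (hu : ContDiff ℝ ((∑ i, s i : ℕ) : ℕ∞) u) :
      ContDiff ℝ (s i) u :=
    hu.of_le (by exact_mod_cast single_le_sum (fun j _ => Nat.zero_le (s j)) (mem_univ i))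
  have hscale (i : Fin r) (k : ℕ) : c i ^ k * iteratedDeriv (s i) (fun t => f i t * g t ^ k) x =
      iteratedDeriv (s i) (fun t => f i t * (c i * g t) ^ k) x := by
    simp_rw [mul_pow, mul_left_comm (f i _)]
    exact (iteratedDeriv_const_mul_field _ _).symm
  simp_rw [← piAntidiag_univ_fin_eq_antidiagonalTuple, hscale]
  rw [sum_piAntidiag_multinomial_mul_prod_iteratedDeriv_mul_pow (fun i => hsmooth i (hf i))
    (fun i => hsmooth i (contDiff_const.mul hg)) (by rw [← sum_mul, hc, zero_mul])]
  simp_rw [deriv_const_mul_field, mul_pow, prod_mul_distrib, prod_pow_eq_pow_sum]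
  ring

theorem stmt_2 (n r : ℕ) (hr : 1 ≤ r)
    (f : Fin r → ℝ → ℝ) (g : ℝ → ℝ)
    (hf : ∀ i, ContDiff ℝ (n : ℕ∞) (f i))
    (hg : ContDiff ℝ (n : ℕ∞) g)
    (c : Fin r → ℝ) (hc : ∑ i, c i = 0)
    (s : Fin r → ℕ) (hs : ∑ i, s i = n) (x : ℝ) :
    ∑ k ∈ Finset.Nat.antidiagonalTuple r n,
      (Nat.multinomial Finset.univ k : ℝ) *
        ∏ i, (c i) ^ (k i) * iteratedDeriv (s i) (fun t => f i t * (g t) ^ (k i)) x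
      = (n.factorial : ℝ) * (∏ i, (c i) ^ (s i)) * (∏ i, f i x) * (deriv g x) ^ n :=
  stmt_2_general n r f g hf hg c hc s hs x
end

section
/- Let n ∈ ℕ and let f, g be real-valued functions on ℝ, each n times differentiable. Then for all x ∈ ℝ, x · Σ_{k=0}^{n} C(n,k) · (d/dx)^k[x^k f(x)] · (d/dx)^{n-k}[x^{n-k} g(x)] = (d/dx)^n [x^{n+1} f(x) g(x)], where C(n,k) is the binomial coefficient. -/
/-!
Write `θ = x d/dx`. Since `d/dx ∘ x = θ + 1`, the operator `T_k u = (d/dx)^k (x^k u)` satisfies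
`T_{k+1} = (θ + k + 1) T_k`. As `θ` is a derivation, Pascal's rule gives
`S_{n+1} = (θ + n + 2) S_n` for `S_n = ∑ C(n,k) T_k f · T_{n-k} g`, while
`(θ + n + 1)(x S_n) = x (θ + n + 2) S_n`. Hence `x S_n` and `T_n (x f g)` satisfy the same
recursion, and the identity follows by induction on `n`.
-/

open Finset

variable {𝕜 : Type*} [NontriviallyNormedField 𝕜]

theorem iteratedDeriv_succ_id_mul {m : ℕ} {v : 𝕜 → 𝕜} (hv : ContDiff 𝕜 (m + 1 : ℕ) v) (x : 𝕜) :
    iteratedDeriv (m + 1) (fun t => t * v t) x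
      = x * iteratedDeriv (m + 1) v x + (m + 1) * iteratedDeriv m v x := by
  rw [iteratedDeriv_fun_mul (f := fun t => t) contDiff_fun_id.contDiffAt hv.contDiffAt,
    sum_range_succ', sum_range_succ', sum_eq_zero fun i _ => by simp [iteratedDeriv_fun_id]]
  simp only [zero_add, Nat.choose_one_right, Nat.cast_add, Nat.cast_one, iteratedDeriv_fun_id,
    one_ne_zero, ↓reduceIte, mul_one, add_tsub_cancel_right, Nat.choose_zero_right, one_mul,
    tsub_zero]
  ring

noncomputable def iteratedDerivPowMul (k : ℕ) (u : 𝕜 → 𝕜) : 𝕜 → 𝕜 :=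
  iteratedDeriv k (fun t => t ^ k * u t)

theorem iteratedDerivPowMul_succ {k : ℕ} {u : 𝕜 → 𝕜} (hu : ContDiff 𝕜 (k + 1 : ℕ) u) (x : 𝕜) :
    iteratedDerivPowMul (k + 1) u x
      = x * deriv (iteratedDerivPowMul k u) x + (k + 1) * iteratedDerivPowMul k u x := by
  have h : (fun t : 𝕜 => t ^ (k + 1) * u t) = fun t => t * (t ^ k * u t) := by
    funext t; ring
  rw [iteratedDerivPowMul, h, iteratedDeriv_succ_id_mul ((contDiff_fun_id.pow k).mul hu),
    iteratedDeriv_succ, iteratedDerivPowMul]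

theorem differentiable_iteratedDerivPowMul {n k : ℕ} {u : 𝕜 → 𝕜}
    (hu : ContDiff 𝕜 (n + 1 : ℕ) u) (hk : k ≤ n) :
    Differentiable 𝕜 (iteratedDerivPowMul k u) :=
  ((contDiff_fun_id.pow k).mul hu).differentiable_iteratedDeriv k
    (by exact_mod_cast Nat.lt_succ_of_le hk)

noncomputable def leibnizPowMulSum (n : ℕ) (f g : 𝕜 → 𝕜) (x : 𝕜) : 𝕜 :=
  ∑ k ∈ range (n + 1),
    (n.choose k : 𝕜) * (iteratedDerivPowMul k f x * iteratedDerivPowMul (n - k) g x)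

theorem differentiable_leibnizPowMulSum {n : ℕ} {f g : 𝕜 → 𝕜} (hf : ContDiff 𝕜 (n + 1 : ℕ) f)
    (hg : ContDiff 𝕜 (n + 1 : ℕ) g) : Differentiable 𝕜 (leibnizPowMulSum n f g) := by
  unfold leibnizPowMulSum
  refine Differentiable.fun_sum fun k hk => (differentiable_const _).mul ?_
  have hk : k ≤ n := Nat.lt_succ_iff.mp (mem_range.mp hk)
  exact (differentiable_iteratedDerivPowMul hf hk).mul
    (differentiable_iteratedDerivPowMul hg (Nat.sub_le n k))

theorem leibnizPowMulSum_succ {n : ℕ} {f g : 𝕜 → 𝕜} (hf : ContDiff 𝕜 (n + 1 : ℕ) f)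
    (hg : ContDiff 𝕜 (n + 1 : ℕ) g) (x : 𝕜) :
    leibnizPowMulSum (n + 1) f g x
      = x * deriv (leibnizPowMulSum n f g) x + (n + 2) * leibnizPowMulSum n f g x := by
  have hderiv : HasDerivAt (leibnizPowMulSum n f g)
      (∑ k ∈ range (n + 1), (n.choose k : 𝕜) *
        (deriv (iteratedDerivPowMul k f) x * iteratedDerivPowMul (n - k) g x
          + iteratedDerivPowMul k f x * deriv (iteratedDerivPowMul (n - k) g) x)) x := by
    refine HasDerivAt.fun_sum fun k hk => HasDerivAt.const_mul _ ?_
    have hk : k ≤ n := Nat.lt_succ_iff.mp (mem_range.mp hk)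
    exact (differentiable_iteratedDerivPowMul hf hk x).hasDerivAt.mul
      (differentiable_iteratedDerivPowMul hg (Nat.sub_le n k) x).hasDerivAt
  rw [hderiv.deriv, leibnizPowMulSum,
    sum_choose_succ_mul (fun i j => iteratedDerivPowMul i f x * iteratedDerivPowMul j g x),
    leibnizPowMulSum, mul_sum, mul_sum, ← sum_add_distrib, ← sum_add_distrib]
  refine sum_congr rfl fun k hk => ?_
  have hk : k ≤ n := Nat.lt_succ_iff.mp (mem_range.mp hk)
  rw [Nat.sub_add_comm hk,
    iteratedDerivPowMul_succ (hf.of_le (by exact_mod_cast Nat.succ_le_succ hk)),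
    iteratedDerivPowMul_succ (hg.of_le (by exact_mod_cast Nat.succ_le_succ (Nat.sub_le n k))),
    Nat.cast_sub hk]
  ring

theorem mul_leibnizPowMulSum {n : ℕ} {f g : 𝕜 → 𝕜} (hf : ContDiff 𝕜 n f) (hg : ContDiff 𝕜 n g) :
    (fun x => x * leibnizPowMulSum n f g x)
      = iteratedDerivPowMul n (fun t => t * (f t * g t)) := by
  induction n generalizing f g with
  | zero =>
    funext x
    simp [leibnizPowMulSum, iteratedDerivPowMul]
  | succ n ih =>
    funext x
    have hfg : ContDiff 𝕜 (n + 1 : ℕ) (fun t => t * (f t * g t)) :=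
      contDiff_fun_id.mul (hf.mul hg)
    rw [iteratedDerivPowMul_succ hfg,
      ← ih (hf.of_le (by norm_cast; omega)) (hg.of_le (by norm_cast; omega)),
      leibnizPowMulSum_succ hf hg,
      deriv_fun_mul differentiableAt_fun_id (differentiable_leibnizPowMulSum hf hg x)]
    simp only [deriv_id'', one_mul]
    ring

theorem stmt_7 (n : ℕ) (f g : ℝ → ℝ)
    (hf : ContDiff ℝ (n : ℕ∞) f) (hg : ContDiff ℝ (n : ℕ∞) g) (x : ℝ) :
    x * ∑ k ∈ Finset.range (n + 1),
      (n.choose k : ℝ) *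
        iteratedDeriv k (fun t => t ^ k * f t) x *
        iteratedDeriv (n - k) (fun t => t ^ (n - k) * g t) x
      = iteratedDeriv n (fun t => t ^ (n + 1) * f t * g t) x := by
  calc _ = x * leibnizPowMulSum n f g x := by
        simp only [leibnizPowMulSum, iteratedDerivPowMul, mul_assoc]
    _ = iteratedDerivPowMul n (fun t => t * (f t * g t)) x :=
        congrFun (mul_leibnizPowMulSum hf hg) x
    _ = _ := by
        rw [iteratedDerivPowMul]
        congr 1
        funext t
        ring
end

section
/- Let n ∈ ℕ, r ∈ ℕ with r ≥ 1, let α₁,…,α_r ∈ ℝ and β ∈ ℝ, let c = (c₁,…,c_r) ∈ ℝ^r with c₁+⋯+c_r = 0, and let s = (s₁,…,s_r) be a multi-index of nonnegative integers with s₁+⋯+s_r = n. Then Σ_{k₁+⋯+k_r = n} (n!/(k₁!⋯k_r!)) · Π_{i=1}^r c_i^{k_i} · C(α_i + k_i β, s_i) = (n!/(s₁!⋯s_r!)) · β^n · Π_{i=1}^r c_i^{s_i}, where for real α and nonnegative integer m, C(α, m) = α(α−1)⋯(α−m+1)/m! is the generalized binomial coefficient. -/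
open scoped BigOperators

/-- The generalized binomial coefficient `C(α, m) = α(α−1)⋯(α−m+1)/m!` for real `α`. -/
noncomputable def genChoose (α : ℝ) (m : ℕ) : ℝ :=
  (∏ j ∈ Finset.range m, (α - j)) / m.factorial

open Finset Polynomial

-- Newton expansion with enlarged range
lemma newton_real (f : ℕ → ℝ) {k N : ℕ} (h : k ≤ N) :
    f k = ∑ m ∈ range (N + 1), (k.choose m : ℝ) * ((fwdDiff 1)^[m] f 0) := by
  have h0 := shift_eq_sum_fwdDiff_iter 1 f k 0
  simp only [zero_add, smul_eq_mul, nsmul_eq_mul, Nat.cast_id, mul_one] at h0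
  rw [h0]
  refine Finset.sum_subset ?_ ?_
  · exact Finset.range_subset_range.2 (by omega)
  · intro m _ hm
    rw [Finset.mem_range, not_lt] at hm
    rw [Nat.choose_eq_zero_of_lt (by omega)]
    simp

lemma taylor_sub_coeff (p : ℝ[X]) (i : ℕ) (h : p.natDegree ≤ i + 1) :
    (Polynomial.taylor 1 p - p).coeff i = (i + 1 : ℝ) * p.coeff (i + 1) := by
  rw [coeff_sub, taylor_coeff]
  have hd : (hasseDeriv i p).natDegree < 2 := by
    have := natDegree_hasseDeriv_le p i
    omega
  rw [eval_eq_sum_range' hd]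
  simp only [hasseDeriv_coeff, one_pow, mul_one]
  rw [Finset.sum_range_succ, Finset.sum_range_one]
  simp only [zero_add, Nat.choose_self, Nat.cast_one, one_mul]
  rw [add_comm 1 i, Nat.choose_succ_self_right]
  push_cast
  ring

lemma fwdDiff_poly_eval (p : ℝ[X]) :
    fwdDiff 1 (fun k : ℕ => p.eval (k : ℝ)) = fun k : ℕ => (Polynomial.taylor 1 p - p).eval (k : ℝ) := by
  funext k
  simp only [fwdDiff, taylor_apply, eval_sub, eval_comp, eval_add, eval_X, eval_C]
  push_cast
  ring_nf

lemma fwdDiff_iter_poly : ∀ (m : ℕ) (p : ℝ[X]), p.natDegree ≤ m →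
    (fwdDiff 1)^[m] (fun k : ℕ => p.eval (k : ℝ)) 0 = (m.factorial : ℝ) * p.coeff m := by
  intro m
  induction m with
  | zero =>
    intro p _
    simp [coeff_zero_eq_eval_zero]
  | succ m ih =>
    intro p hp
    rw [Function.iterate_succ_apply, fwdDiff_poly_eval,
      ih _ (by
        rw [natDegree_le_iff_coeff_eq_zero]
        intro i hi
        rw [taylor_sub_coeff _ _ (hp.trans (by omega))]
        rw [coeff_eq_zero_of_natDegree_lt (by omega)]
        ring),
      taylor_sub_coeff _ _ hp, Nat.factorial_succ]
    push_cast
    ring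

noncomputable def gcPoly (α β : ℝ) (s : ℕ) : ℝ[X] :=
  Polynomial.C ((s.factorial : ℝ))⁻¹ * ∏ j ∈ range s, (Polynomial.C β * X + Polynomial.C (α - j))

noncomputable def coefD (α β : ℝ) (s m : ℕ) : ℝ :=
  (fwdDiff 1)^[m] (fun j : ℕ => genChoose (α + j * β) s) 0

lemma gcFun_eq (α β : ℝ) (s : ℕ) :
    (fun j : ℕ => genChoose (α + j * β) s) = fun k : ℕ => (gcPoly α β s).eval (k : ℝ) := by
  funext k
  simp only [gcPoly, genChoose, eval_mul, eval_C, eval_prod, eval_add, eval_X]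
  rw [div_eq_inv_mul]
  congr 1
  exact Finset.prod_congr rfl fun j _ => by ring

lemma gcPoly_natDegree (α β : ℝ) (s : ℕ) : (gcPoly α β s).natDegree ≤ s := by
  refine (natDegree_C_mul_le _ _).trans ((natDegree_prod_le _ _).trans ?_)
  have h1 : ∀ j ∈ range s, (Polynomial.C β * X + Polynomial.C (α - (j : ℝ))).natDegree ≤ 1 :=
    fun j _ => natDegree_linear_le
  refine (Finset.sum_le_sum h1).trans ?_
  simp

lemma gcPoly_coeff (α β : ℝ) (s : ℕ) : (gcPoly α β s).coeff s = β ^ s / s.factorial := by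
  rw [gcPoly, coeff_C_mul]
  rw [div_eq_inv_mul]
  congr 1
  rcases eq_or_ne β 0 with hβ | hβ
  · subst hβ
    rcases Nat.eq_zero_or_pos s with hs | hs
    · subst hs; simp
    · simp only [map_zero, zero_mul, zero_add, zero_pow (Nat.pos_iff_ne_zero.1 hs)]
      refine coeff_eq_zero_of_natDegree_lt (lt_of_le_of_lt ?_ hs)
      refine (natDegree_prod_le _ _).trans ?_
      exact le_of_eq (Finset.sum_eq_zero fun j _ => natDegree_C _)
  · have hfac : ∀ j ∈ range s, Polynomial.C β * X + Polynomial.C (α - j)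
        = Polynomial.C β * (X + Polynomial.C ((α - j) / β)) := by
      intro j _
      rw [mul_add, ← map_mul, mul_div_cancel₀ _ hβ]
    rw [Finset.prod_congr rfl hfac, Finset.prod_mul_distrib, Finset.prod_const, Finset.card_range,
      ← map_pow, coeff_C_mul]
    have hmon : (∏ j ∈ range s, (X + Polynomial.C ((α - (j : ℝ)) / β))).Monic :=
      monic_prod_of_monic _ _ fun j _ => monic_X_add_C _
    have hdeg : (∏ j ∈ range s, (X + Polynomial.C ((α - (j : ℝ)) / β))).natDegree = s := by
      rw [natDegree_prod_of_monic _ _ fun j _ => monic_X_add_C _]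
      simp [natDegree_X_add_C]
    have h1 := hmon.coeff_natDegree
    rw [hdeg] at h1
    rw [h1, mul_one]

lemma coefD_of_lt (α β : ℝ) {s m : ℕ} (h : s < m) : coefD α β s m = 0 := by
  rw [coefD, gcFun_eq, fwdDiff_iter_poly m _ ((gcPoly_natDegree α β s).trans h.le),
    coeff_eq_zero_of_natDegree_lt (lt_of_le_of_lt (gcPoly_natDegree α β s) h), mul_zero]

lemma coefD_self (α β : ℝ) (s : ℕ) : coefD α β s s = β ^ s := by
  rw [coefD, gcFun_eq, fwdDiff_iter_poly s _ (gcPoly_natDegree α β s), gcPoly_coeff,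
    mul_div_cancel₀]
  exact_mod_cast s.factorial_ne_zero

lemma genChoose_expand (α β : ℝ) (s : ℕ) {k N : ℕ} (hk : k ≤ N) :
    genChoose (α + k * β) s = ∑ m ∈ range (N + 1), (k.choose m : ℝ) * coefD α β s m :=
  newton_real (fun j : ℕ => genChoose (α + j * β) s) hk

section Comb
variable {r : ℕ}

lemma multinomial_real (f : Fin r → ℕ) :
    (Nat.multinomial Finset.univ f : ℝ)
      = ((∑ i, f i).factorial : ℝ) / ∏ i, ((f i).factorial : ℝ) := by
  have hne : (∏ i, ((f i).factorial : ℝ)) ≠ 0 :=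
    Finset.prod_ne_zero_iff.2 fun i _ => Nat.cast_ne_zero.2 (f i).factorial_ne_zero
  rw [eq_div_iff hne, mul_comm]
  exact_mod_cast congrArg (Nat.cast (R := ℝ)) (Nat.multinomial_spec Finset.univ f)

lemma choose_real (a b : ℕ) :
    ((a + b).choose a : ℝ) = ((a + b).factorial : ℝ) / ((a.factorial : ℝ) * b.factorial) := by
  rw [eq_div_iff (by positivity), ← mul_assoc, Nat.choose_symm_add]
  exact_mod_cast congrArg (Nat.cast (R := ℝ))
    (Nat.add_choose_mul_factorial_mul_factorial a b)

lemma multinomial_add_real (m l : Fin r → ℕ) :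
    (Nat.multinomial Finset.univ (m + l) : ℝ) * ∏ i, (((m i + l i).choose (m i)) : ℝ)
      = (((∑ i, m i) + ∑ i, l i).choose (∑ i, m i) : ℝ)
        * (Nat.multinomial Finset.univ m : ℝ) * (Nat.multinomial Finset.univ l : ℝ) := by
  have hsum : ∑ i, (m + l) i = (∑ i, m i) + ∑ i, l i := by
    simp [Finset.sum_add_distrib]
  rw [multinomial_real, multinomial_real, multinomial_real, choose_real, hsum]
  have hprod : ∀ i : Fin r, (((m i + l i).choose (m i)) : ℝ)
      = (((m i + l i).factorial : ℝ)) / (((m i).factorial : ℝ) * ((l i).factorial : ℝ)) :=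
    fun i => choose_real _ _
  rw [Finset.prod_congr rfl fun i _ => hprod i, Finset.prod_div_distrib,
    Finset.prod_mul_distrib]
  have h1 : (∏ i, (((m + l) i).factorial : ℝ)) = ∏ i, (((m i + l i).factorial : ℝ)) := rfl
  rw [h1]
  have hM : (∏ i, (((m i).factorial : ℝ))) ≠ 0 :=
    Finset.prod_ne_zero_iff.2 fun i _ => Nat.cast_ne_zero.2 (Nat.factorial_ne_zero _)
  have hL : (∏ i, (((l i).factorial : ℝ))) ≠ 0 :=
    Finset.prod_ne_zero_iff.2 fun i _ => Nat.cast_ne_zero.2 (Nat.factorial_ne_zero _)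
  have hML : (∏ i, (((m i + l i).factorial : ℝ))) ≠ 0 :=
    Finset.prod_ne_zero_iff.2 fun i _ => Nat.cast_ne_zero.2 (Nat.factorial_ne_zero _)
  have hMf : ((∑ i, m i).factorial : ℝ) ≠ 0 := Nat.cast_ne_zero.2 (Nat.factorial_ne_zero _)
  have hLf : ((∑ i, l i).factorial : ℝ) ≠ 0 := Nat.cast_ne_zero.2 (Nat.factorial_ne_zero _)
  field_simp

lemma multinomial_thm (N : ℕ) (c : Fin r → ℝ) :
    ∑ k ∈ Finset.Nat.antidiagonalTuple r N,
      (Nat.multinomial Finset.univ k : ℝ) * ∏ i, c i ^ k i = (∑ i, c i) ^ N := by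
  rw [← Finset.piAntidiag_univ_fin_eq_antidiagonalTuple]
  exact (Finset.sum_pow_eq_sum_piAntidiag Finset.univ c N).symm

end Comb

section Tlemmas
variable {r n : ℕ} (c : Fin r → ℝ)

lemma T_of_lt (hc : ∑ i, c i = 0) (g : Fin r → ℕ) (hg : ∑ i, g i < n) :
    ∑ k ∈ Finset.Nat.antidiagonalTuple r n,
      (Nat.multinomial Finset.univ k : ℝ) * ∏ i, (c i ^ k i * ((k i).choose (g i) : ℝ)) = 0 := by
  classical
  set M := ∑ i, g i with hM
  have hfilter : ∑ k ∈ (Finset.Nat.antidiagonalTuple r n).filter (fun k => ∀ i, g i ≤ k i),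
      (Nat.multinomial Finset.univ k : ℝ) * ∏ i, (c i ^ k i * ((k i).choose (g i) : ℝ))
      = ∑ k ∈ Finset.Nat.antidiagonalTuple r n,
      (Nat.multinomial Finset.univ k : ℝ) * ∏ i, (c i ^ k i * ((k i).choose (g i) : ℝ)) := by
    refine Finset.sum_filter_of_ne ?_
    intro k _ hne
    by_contra h
    push_neg at h
    obtain ⟨i, hi⟩ := h
    refine hne ?_
    rw [Finset.prod_eq_zero (Finset.mem_univ i)
      (by rw [Nat.choose_eq_zero_of_lt hi]; norm_num), mul_zero]
  rw [← hfilter]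
  have hbij : ∑ k ∈ (Finset.Nat.antidiagonalTuple r n).filter (fun k => ∀ i, g i ≤ k i),
      (Nat.multinomial Finset.univ k : ℝ) * ∏ i, (c i ^ k i * ((k i).choose (g i) : ℝ))
      = ∑ l ∈ Finset.Nat.antidiagonalTuple r (n - M),
      (Nat.multinomial Finset.univ (g + l) : ℝ) *
        ∏ i, (c i ^ ((g + l) i) * (((g + l) i).choose (g i) : ℝ)) := by
    refine Finset.sum_nbij' (fun k => k - g) (fun l => g + l) ?_ ?_ ?_ ?_ ?_
    · intro k hk
      rw [Finset.mem_filter, Finset.Nat.mem_antidiagonalTuple] at hk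
      obtain ⟨hk1, hk2⟩ := hk
      rw [Finset.Nat.mem_antidiagonalTuple]
      have h2 : ∑ i, (k - g) i + ∑ i, g i = ∑ i, k i := by
        rw [← Finset.sum_add_distrib]
        refine Finset.sum_congr rfl fun i _ => ?_
        simp only [Pi.sub_apply]
        have := hk2 i
        omega
      show ∑ i, (k - g) i = n - M
      omega
    · intro l hl
      rw [Finset.Nat.mem_antidiagonalTuple] at hl
      rw [Finset.mem_filter, Finset.Nat.mem_antidiagonalTuple]
      constructor
      · simp only [Pi.add_apply, Finset.sum_add_distrib, hl, ← hM]
        omega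
      · intro i; simp
    · intro k hk
      rw [Finset.mem_filter] at hk
      exact funext fun i => Nat.add_sub_cancel' (hk.2 i)
    · intro l _
      exact funext fun i => by simp
    · intro k hk
      rw [Finset.mem_filter] at hk
      have hrec : g + (k - g) = k := funext fun i => Nat.add_sub_cancel' (hk.2 i)
      rw [hrec]
  rw [hbij]
  have hterm : ∀ l ∈ Finset.Nat.antidiagonalTuple r (n - M),
      (Nat.multinomial Finset.univ (g + l) : ℝ) *
        ∏ i, (c i ^ ((g + l) i) * (((g + l) i).choose (g i) : ℝ))
      = (((M + (n - M)).choose M : ℝ) * (Nat.multinomial Finset.univ g : ℝ)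
          * ∏ i, c i ^ g i) * ((Nat.multinomial Finset.univ l : ℝ) * ∏ i, c i ^ l i) := by
    intro l hl
    rw [Finset.Nat.mem_antidiagonalTuple] at hl
    have hadd := multinomial_add_real g l
    rw [hl, ← hM] at hadd
    have hsplit : ∏ i, (c i ^ ((g + l) i) * (((g + l) i).choose (g i) : ℝ))
        = (∏ i, (((g i + l i).choose (g i)) : ℝ)) *
          ((∏ i, c i ^ g i) * ∏ i, c i ^ l i) := by
      rw [← Finset.prod_mul_distrib, ← Finset.prod_mul_distrib]
      exact Finset.prod_congr rfl fun i _ => by simp only [Pi.add_apply, pow_add]; ring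
    rw [hsplit]
    linear_combination ((∏ i, c i ^ g i) * ∏ i, c i ^ l i) * hadd
  rw [Finset.sum_congr rfl hterm, ← Finset.mul_sum, multinomial_thm, hc,
    zero_pow (by omega : n - M ≠ 0), mul_zero]

lemma T_of_gt (g : Fin r → ℕ) (hg : n < ∑ i, g i) :
    ∑ k ∈ Finset.Nat.antidiagonalTuple r n,
      (Nat.multinomial Finset.univ k : ℝ) * ∏ i, (c i ^ k i * ((k i).choose (g i) : ℝ)) = 0 := by
  refine Finset.sum_eq_zero fun k hk => ?_
  rw [Finset.Nat.mem_antidiagonalTuple] at hk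
  have h : ∃ i, k i < g i := by
    by_contra h
    push_neg at h
    have := Finset.sum_le_sum (fun i (_ : i ∈ Finset.univ) => h i)
    omega
  obtain ⟨i, hi⟩ := h
  rw [Finset.prod_eq_zero (Finset.mem_univ i)
    (by rw [Nat.choose_eq_zero_of_lt hi]; norm_num), mul_zero]

lemma T_of_eq (g : Fin r → ℕ) (hg : ∑ i, g i = n) :
    ∑ k ∈ Finset.Nat.antidiagonalTuple r n,
      (Nat.multinomial Finset.univ k : ℝ) * ∏ i, (c i ^ k i * ((k i).choose (g i) : ℝ))
      = (Nat.multinomial Finset.univ g : ℝ) * ∏ i, c i ^ g i := by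
  rw [Finset.sum_eq_single_of_mem g (Finset.Nat.mem_antidiagonalTuple.2 hg) ?h]
  · simp [Nat.choose_self]
  case h =>
    intro k hk hne
    rw [Finset.Nat.mem_antidiagonalTuple] at hk
    have h : ∃ i, k i < g i := by
      by_contra h
      push_neg at h
      refine hne (funext fun i => ?_)
      have hsum : ∑ i, g i = ∑ i, k i := by omega
      exact ((Finset.sum_eq_sum_iff_of_le fun i _ => h i).1 hsum i
        (Finset.mem_univ i)).symm
    obtain ⟨i, hi⟩ := h
    rw [Finset.prod_eq_zero (Finset.mem_univ i)
      (by rw [Nat.choose_eq_zero_of_lt hi]; norm_num), mul_zero]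

end Tlemmas

theorem stmt_8 (n r : ℕ) (hr : 1 ≤ r)
    (α : Fin r → ℝ) (β : ℝ)
    (c : Fin r → ℝ) (hc : ∑ i, c i = 0)
    (s : Fin r → ℕ) (hs : ∑ i, s i = n) :
    ∑ k ∈ Finset.Nat.antidiagonalTuple r n,
      (Nat.multinomial Finset.univ k : ℝ) *
        ∏ i, (c i) ^ (k i) * genChoose (α i + (k i : ℝ) * β) (s i)
      = (Nat.multinomial Finset.univ s : ℝ) * β ^ n * ∏ i, (c i) ^ (s i) := by
  classical
  have hks : ∀ k : Fin r → ℕ, k ∈ Finset.Nat.antidiagonalTuple r n → ∀ i, k i ≤ n := by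
    intro k hk i
    have h1 := Finset.Nat.mem_antidiagonalTuple.1 hk
    calc k i ≤ ∑ j, k j :=
          Finset.single_le_sum (fun j _ => Nat.zero_le _) (Finset.mem_univ i)
      _ = n := h1
  have step1 : ∀ k ∈ Finset.Nat.antidiagonalTuple r n,
      (Nat.multinomial Finset.univ k : ℝ) *
        ∏ i, (c i) ^ (k i) * genChoose (α i + (k i : ℝ) * β) (s i)
      = ∑ g ∈ Fintype.piFinset (fun _ : Fin r => Finset.range (n + 1)),
          (∏ i, coefD (α i) β (s i) (g i)) *
            ((Nat.multinomial Finset.univ k : ℝ) *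
              ∏ i, (c i ^ k i * (((k i).choose (g i) : ℝ)))) := by
    intro k hk
    have h1 : ∏ i, (c i) ^ (k i) * genChoose (α i + (k i : ℝ) * β) (s i)
        = ∑ g ∈ Fintype.piFinset (fun _ : Fin r => Finset.range (n + 1)),
            ∏ i, (c i ^ k i * (((k i).choose (g i) : ℝ) * coefD (α i) β (s i) (g i))) := by
      calc ∏ i, (c i) ^ (k i) * genChoose (α i + (k i : ℝ) * β) (s i)
          = ∏ i, ∑ m ∈ Finset.range (n + 1),
              (c i ^ k i * (((k i).choose m : ℝ) * coefD (α i) β (s i) m)) := by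
            refine Finset.prod_congr rfl fun i _ => ?_
            rw [genChoose_expand (α i) β (s i) (hks k hk i), Finset.mul_sum]
        _ = ∑ g ∈ Fintype.piFinset (fun _ : Fin r => Finset.range (n + 1)),
              ∏ i, (c i ^ k i * (((k i).choose (g i) : ℝ) * coefD (α i) β (s i) (g i))) :=
            Finset.prod_univ_sum (fun _ : Fin r => Finset.range (n + 1))
              (fun i m => c i ^ k i * (((k i).choose m : ℝ) * coefD (α i) β (s i) m))
    rw [h1, Finset.mul_sum]
    refine Finset.sum_congr rfl fun g _ => ?_
    have h2 : ∏ i, (c i ^ k i * (((k i).choose (g i) : ℝ) * coefD (α i) β (s i) (g i)))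
        = (∏ i, coefD (α i) β (s i) (g i)) *
            ∏ i, (c i ^ k i * ((k i).choose (g i) : ℝ)) := by
      rw [← Finset.prod_mul_distrib]
      exact Finset.prod_congr rfl fun i _ => by ring
    rw [h2]
    ring
  rw [Finset.sum_congr rfl step1, Finset.sum_comm]
  have step2 : ∀ g ∈ Fintype.piFinset (fun _ : Fin r => Finset.range (n + 1)),
      ∑ k ∈ Finset.Nat.antidiagonalTuple r n,
        (∏ i, coefD (α i) β (s i) (g i)) *
          ((Nat.multinomial Finset.univ k : ℝ) *
            ∏ i, (c i ^ k i * (((k i).choose (g i) : ℝ))))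
      = (∏ i, coefD (α i) β (s i) (g i)) *
          ∑ k ∈ Finset.Nat.antidiagonalTuple r n,
            (Nat.multinomial Finset.univ k : ℝ) *
              ∏ i, (c i ^ k i * (((k i).choose (g i) : ℝ))) :=
    fun g _ => (Finset.mul_sum _ _ _).symm
  rw [Finset.sum_congr rfl step2]
  have hsmem : s ∈ Fintype.piFinset (fun _ : Fin r => Finset.range (n + 1)) := by
    rw [Fintype.mem_piFinset]
    intro i
    rw [Finset.mem_range]
    have : s i ≤ n := by
      calc s i ≤ ∑ j, s j :=
            Finset.single_le_sum (fun j _ => Nat.zero_le _) (Finset.mem_univ i)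
        _ = n := hs
    omega
  rw [Finset.sum_eq_single_of_mem s hsmem ?hzero]
  · rw [T_of_eq c s hs]
    have : ∏ i, coefD (α i) β (s i) (s i) = β ^ n := by
      rw [Finset.prod_congr rfl fun i _ => coefD_self (α i) β (s i),
        Finset.prod_pow_eq_pow_sum, hs]
    rw [this]
    ring
  case hzero =>
    intro g _ hgs
    rcases lt_trichotomy (∑ i, g i) n with hlt | heq | hgt
    · rw [T_of_lt c hc g hlt, mul_zero]
    · have h : ∃ i, s i < g i := by
        by_contra h
        push_neg at h
        refine hgs (funext fun i => ?_)
        have hsum : ∑ i, g i = ∑ i, s i := by omega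
        exact (Finset.sum_eq_sum_iff_of_le fun i _ => h i).1 hsum i (Finset.mem_univ i)
      obtain ⟨i, hi⟩ := h
      rw [Finset.prod_eq_zero (Finset.mem_univ i) (coefD_of_lt (α i) β hi), zero_mul]
    · rw [T_of_gt c g hgt, mul_zero]
end

section
/- Let n ∈ ℕ, let α₁, α₂, β ∈ ℝ, and let s be an integer with 0 ≤ s ≤ n. Then Σ_{k=0}^{n} (-1)^k · C(n,k) · C(α₁ + kβ, s) · C(α₂ + (n−k)β, n−s) = (-1)^s · C(n,s) · β^n, where C(n,k) is the ordinary binomial coefficient and, for real α and nonnegative integer m, C(α, m) = α(α−1)⋯(α−m+1)/m! is the generalized binomial coefficient. -/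
open scoped BigOperators
open Polynomial

/-- Abel/Pascal summation step. -/
lemma abel_step (n : ℕ) (f : ℕ → ℝ) :
    ∑ k ∈ Finset.range (n + 2), (-1 : ℝ) ^ k * ((n+1).choose k : ℝ) * f k
      = -∑ k ∈ Finset.range (n + 1), (-1 : ℝ) ^ k * (n.choose k : ℝ) * (f (k+1) - f k) := by
  set g : ℕ → ℝ := fun i => (-1:ℝ)^i * (n.choose i : ℝ) * f i with hg
  have gzero : g 0 = f 0 := by simp [hg]
  have gtop : g (n+1) = 0 := by simp [hg, Nat.choose_succ_self]
  rw [Finset.sum_range_succ']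
  have h1 : ∀ i, (-1 : ℝ) ^ (i+1) * (((n+1).choose (i+1) : ℕ) : ℝ) * f (i+1)
      = -((-1:ℝ)^i * (n.choose i : ℝ) * f (i+1)) + g (i+1) := by
    intro i
    simp only [hg, Nat.choose_succ_succ]
    push_cast
    ring
  simp only [h1]
  rw [Finset.sum_add_distrib]
  have h3 : ∑ i ∈ Finset.range (n+1), g (i+1) = ∑ i ∈ Finset.range (n+1), g i - f 0 := by
    have ht := Finset.sum_range_sub' g (n+1)
    rw [Finset.sum_sub_distrib] at ht
    rw [gzero, gtop] at ht
    linarith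
  rw [h3]
  have h4 : ∀ i, (-1:ℝ)^i * (n.choose i : ℝ) * (f (i+1) - f i)
      = (-1:ℝ)^i * (n.choose i : ℝ) * f (i+1) - g i := by
    intro i; simp only [hg]; ring
  simp only [h4]
  rw [Finset.sum_sub_distrib, Finset.sum_neg_distrib]
  simp only [Nat.choose_zero_right, Nat.cast_one]
  ring

lemma hasse_eval_one (n : ℕ) (p : Polynomial ℝ) (hp : p.natDegree ≤ n + 1) :
    (Polynomial.hasseDeriv n p).eval 1 = p.coeff n + (n+1 : ℝ) * p.coeff (n+1) := by
  have hd : (Polynomial.hasseDeriv n p).natDegree < 2 := by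
    have := Polynomial.natDegree_hasseDeriv_le p n
    omega
  rw [Polynomial.eval_eq_sum_range' hd]
  simp [Finset.sum_range_succ, Polynomial.hasseDeriv_coeff]
  rw [Nat.add_comm 1 n, Nat.choose_succ_self_right]
  push_cast; ring

lemma hasse_eval_one' (n : ℕ) (p : Polynomial ℝ) (hp : p.natDegree ≤ n + 1) :
    (Polynomial.hasseDeriv (n+1) p).eval 1 = p.coeff (n+1) := by
  have hd : (Polynomial.hasseDeriv (n+1) p).natDegree < 1 := by
    have := Polynomial.natDegree_hasseDeriv_le p (n+1)
    omega
  rw [Polynomial.eval_eq_sum_range' hd]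
  simp [Polynomial.hasseDeriv_coeff]

/-- Main finite-difference lemma. -/
lemma diff_sum : ∀ (n : ℕ) (p : Polynomial ℝ), p.natDegree ≤ n →
    ∑ k ∈ Finset.range (n + 1), (-1 : ℝ) ^ k * (n.choose k : ℝ) * p.eval (k : ℝ)
      = (-1 : ℝ) ^ n * (n.factorial : ℝ) * p.coeff n := by
  intro n
  induction n with
  | zero =>
    intro p hp
    rw [Polynomial.eq_C_of_natDegree_le_zero hp]
    simp
  | succ n ih =>
    intro p hp
    set q : Polynomial ℝ := Polynomial.taylor 1 p - p with hq
    have hqc : ∀ i, q.coeff i = (Polynomial.hasseDeriv i p).eval 1 - p.coeff i := by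
      intro i
      simp [hq, Polynomial.taylor_coeff]
    have hqtop : q.coeff (n+1) = 0 := by
      rw [hqc, hasse_eval_one' n p hp, sub_self]
    have hqn : q.coeff n = (n+1 : ℝ) * p.coeff (n+1) := by
      rw [hqc, hasse_eval_one n p hp]; ring
    have hqd : q.natDegree ≤ n := by
      rw [Polynomial.natDegree_le_iff_coeff_eq_zero]
      intro m hm
      rcases Nat.lt_or_ge m (n+2) with h | h
      · have : m = n + 1 := by omega
        rw [this]; exact hqtop
      · apply Polynomial.coeff_eq_zero_of_natDegree_lt
        have h1 : q.natDegree
            ≤ max (Polynomial.taylor 1 p).natDegree p.natDegree :=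
          Polynomial.natDegree_sub_le _ _
        have h2 : (Polynomial.taylor 1 p).natDegree = p.natDegree := Polynomial.natDegree_taylor p 1
        omega
    have heval : ∀ k : ℕ, q.eval (k : ℝ) = p.eval ((k+1 : ℕ) : ℝ) - p.eval (k : ℝ) := by
      intro k
      simp only [hq, Polynomial.eval_sub, Polynomial.taylor_eval]
      push_cast; ring
    calc ∑ k ∈ Finset.range (n + 1 + 1), (-1:ℝ)^k * ((n+1).choose k : ℝ) * p.eval (k:ℝ)
        = -∑ k ∈ Finset.range (n+1), (-1:ℝ)^k * (n.choose k : ℝ)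
            * (p.eval ((k+1:ℕ):ℝ) - p.eval (k:ℝ)) := by
          have := abel_step n (fun k => p.eval (k:ℝ))
          push_cast at this ⊢
          exact this
      _ = -∑ k ∈ Finset.range (n+1), (-1:ℝ)^k * (n.choose k : ℝ) * q.eval (k:ℝ) := by
          congr 1; apply Finset.sum_congr rfl; intro k _; rw [heval k]
      _ = -((-1:ℝ)^n * (n.factorial:ℝ) * q.coeff n) := by rw [ih q hqd]
      _ = (-1:ℝ)^(n+1) * ((n+1).factorial : ℝ) * p.coeff (n+1) := by
          rw [hqn]; push_cast [Nat.factorial_succ]; ring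

theorem stmt_9 (n : ℕ) (α₁ α₂ β : ℝ) (s : ℕ) (hs : s ≤ n) :
    ∑ k ∈ Finset.range (n + 1),
      (-1 : ℝ) ^ k * (n.choose k : ℝ) *
        genChoose (α₁ + (k : ℝ) * β) s * genChoose (α₂ + ((n - k : ℕ) : ℝ) * β) (n - s)
      = (-1 : ℝ) ^ s * (n.choose s : ℝ) * β ^ n := by
  set c : ℝ := ((s.factorial : ℝ) * ((n - s).factorial : ℝ))⁻¹ with hc
  set L : ℕ → Polynomial ℝ := fun j =>
    if j < s then (Polynomial.C β * Polynomial.X + Polynomial.C (α₁ - j))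
    else (Polynomial.C (-β) * Polynomial.X + Polynomial.C (α₂ + n * β - ((j - s : ℕ) : ℝ)))
    with hL
  set P : Polynomial ℝ := Polynomial.C c * ∏ j ∈ Finset.range n, L j with hP
  have hns : s + (n - s) = n := Nat.add_sub_cancel' hs
  have hLd : ∀ j, (L j).natDegree ≤ 1 := by
    intro j
    by_cases h : j < s
    · simp only [hL, if_pos h]; exact Polynomial.natDegree_linear_le
    · simp only [hL, if_neg h]; exact Polynomial.natDegree_linear_le
  have hPd : P.natDegree ≤ n := by
    refine le_trans (Polynomial.natDegree_mul_le) ?_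
    simp only [Polynomial.natDegree_C, zero_add]
    refine le_trans (Polynomial.natDegree_prod_le _ _) ?_
    calc ∑ j ∈ Finset.range n, (L j).natDegree ≤ ∑ j ∈ Finset.range n, 1 :=
          Finset.sum_le_sum fun j _ => hLd j
      _ = n := by simp
  have hLc1 : ∀ j, (L j).coeff 1 = if j < s then β else -β := by
    intro j
    by_cases h : j < s <;>
      simp [hL, h, Polynomial.coeff_add, Polynomial.coeff_C_mul, Polynomial.coeff_X_one,
        Polynomial.coeff_C]
  have hprodc : (∏ j ∈ Finset.range n, L j).coeff n = ∏ j ∈ Finset.range n, (L j).coeff 1 := by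
    have := Polynomial.coeff_prod_of_natDegree_le (s := Finset.range n) L 1 (fun j _ => hLd j)
    simpa using this
  have hcoeff : P.coeff n = c * (β ^ s * (-β) ^ (n - s)) := by
    rw [hP, Polynomial.coeff_C_mul, hprodc]
    congr 1
    calc ∏ j ∈ Finset.range n, (L j).coeff 1
        = ∏ j ∈ Finset.range (s + (n - s)), (L j).coeff 1 := by rw [hns]
      _ = (∏ j ∈ Finset.range s, (L j).coeff 1) *
            ∏ j ∈ Finset.range (n - s), (L (s + j)).coeff 1 := Finset.prod_range_add _ s (n - s)
      _ = β ^ s * (-β) ^ (n - s) := by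
          congr 1
          · rw [Finset.prod_congr rfl fun j hj => by
              rw [hLc1, if_pos (Finset.mem_range.mp hj)]]
            simp
          · rw [Finset.prod_congr rfl fun j _ => by
              rw [hLc1 (s + j), if_neg (by omega)]]
            simp
  have hfacs : (s.factorial : ℝ) ≠ 0 := Nat.cast_ne_zero.mpr s.factorial_ne_zero
  have hfacns : ((n - s).factorial : ℝ) ≠ 0 := Nat.cast_ne_zero.mpr (n - s).factorial_ne_zero
  have heval : ∀ k ∈ Finset.range (n + 1),
      (-1 : ℝ) ^ k * (n.choose k : ℝ) * genChoose (α₁ + (k : ℝ) * β) s *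
          genChoose (α₂ + ((n - k : ℕ) : ℝ) * β) (n - s)
        = (-1 : ℝ) ^ k * (n.choose k : ℝ) * P.eval (k : ℝ) := by
    intro k hk
    have hk' : k ≤ n := Nat.lt_succ_iff.mp (Finset.mem_range.mp hk)
    have hcast : ((n - k : ℕ) : ℝ) = (n : ℝ) - (k : ℝ) := by
      push_cast [hk']; ring
    have hPe : P.eval (k : ℝ)
        = c * ((∏ j ∈ Finset.range s, (α₁ + (k : ℝ) * β - j)) *
            ∏ j ∈ Finset.range (n - s), (α₂ + ((n : ℝ) - k) * β - j)) := by
      rw [hP, Polynomial.eval_mul, Polynomial.eval_C, Polynomial.eval_prod]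
      congr 1
      calc ∏ j ∈ Finset.range n, (L j).eval (k : ℝ)
          = ∏ j ∈ Finset.range (s + (n - s)), (L j).eval (k : ℝ) := by rw [hns]
        _ = (∏ j ∈ Finset.range s, (L j).eval (k : ℝ)) *
              ∏ j ∈ Finset.range (n - s), (L (s + j)).eval (k : ℝ) :=
            Finset.prod_range_add _ s (n - s)
        _ = _ := by
            congr 1
            · refine Finset.prod_congr rfl fun j hj => ?_
              rw [hL]
              simp only [if_pos (Finset.mem_range.mp hj)]
              simp; ring
            · refine Finset.prod_congr rfl fun j _ => ?_
              rw [hL]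
              simp only [if_neg (show ¬ s + j < s by omega)]
              simp [Nat.add_sub_cancel_left]; ring
    rw [hPe, genChoose, genChoose, hcast]
    simp only [hc]
    field_simp
  rw [Finset.sum_congr rfl heval, diff_sum n P hPd, hcoeff]
  rw [Nat.cast_choose ℝ hs]
  have hsign : (-β : ℝ) ^ (n - s) = (-1 : ℝ) ^ (n - s) * β ^ (n - s) := by
    rw [neg_pow]
  have hsign2 : (-1 : ℝ) ^ n * (-1 : ℝ) ^ (n - s) = (-1 : ℝ) ^ s := by
    rw [← pow_add, show n + (n - s) = s + 2 * (n - s) by omega, pow_add, pow_mul]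
    simp
  have hbeta : β ^ s * β ^ (n - s) = β ^ n := by rw [← pow_add, hns]
  rw [hc, hsign]
  field_simp
  rw [← hbeta, ← hsign2]
  ring
end

section
/- Let n ∈ ℕ, let α₁, α₂, β ∈ ℝ, and let s be an integer with 0 ≤ s ≤ n. Then Σ_{k=0}^{n} (-1)^k · C(n,k) · (α₁ + kβ)^s · (α₂ + (n−k)β)^{n−s} = (-1)^s · n! · β^n, where C(n,k) is the binomial coefficient. -/
open scoped BigOperators

lemma key_alt_sum (n : ℕ) (P : Polynomial ℝ) (hP : P.natDegree ≤ n) :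
    ∑ k ∈ Finset.range (n + 1), (-1 : ℝ) ^ k * (n.choose k : ℝ) * P.eval (k : ℝ)
      = (-1 : ℝ) ^ n * (n.factorial : ℝ) * P.coeff n := by
  induction n generalizing P with
  | zero =>
    simp [← Polynomial.coeff_zero_eq_eval_zero]
  | succ n ih =>
    set Q : Polynomial ℝ := Polynomial.taylor (1 : ℝ) P - P with hQ
    have hQc : ∀ m, Q.coeff m = (Polynomial.hasseDeriv m P).eval 1 - P.coeff m := by
      intro m
      simp [hQ, Polynomial.taylor_coeff]
    have hQtop : ∀ m, n < m → Q.coeff m = 0 := by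
      intro m hm
      have h1 : (Polynomial.hasseDeriv m P).natDegree < 1 := by
        have := Polynomial.natDegree_hasseDeriv_le P m
        omega
      have h2 : (Polynomial.hasseDeriv m P).eval 1 = (Polynomial.hasseDeriv m P).coeff 0 := by
        rw [Polynomial.eval_eq_sum_range' h1]
        simp
      rw [hQc, h2, Polynomial.hasseDeriv_coeff]
      simp
    have hQdeg : Q.natDegree ≤ n := Polynomial.natDegree_le_iff_coeff_eq_zero.mpr hQtop
    have hQn : Q.coeff n = ((n : ℝ) + 1) * P.coeff (n + 1) := by
      have h1 : (Polynomial.hasseDeriv n P).natDegree < 2 := by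
        have := Polynomial.natDegree_hasseDeriv_le P n
        omega
      rw [hQc, Polynomial.eval_eq_sum_range' h1]
      simp [Polynomial.hasseDeriv_coeff, Finset.sum_range_succ, Nat.choose_succ_self_right,
        add_comm 1 n]
    have htay : ∀ k : ℕ, (Polynomial.taylor (1:ℝ) P).eval (k : ℝ) = P.eval (((k+1 : ℕ)) : ℝ) := by
      intro k
      push_cast
      rw [Polynomial.taylor_eval]
    set f : ℕ → ℝ := fun k => (-1 : ℝ) ^ k * (n.choose k : ℝ) * P.eval (k : ℝ) with hf
    set ST : ℝ := ∑ k ∈ Finset.range (n + 1),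
        (-1 : ℝ) ^ k * (n.choose k : ℝ) * (Polynomial.taylor (1:ℝ) P).eval (k : ℝ) with hST
    have step1 : ∑ k ∈ Finset.range (n + 2), (-1 : ℝ) ^ k * ((n+1).choose k : ℝ) * P.eval (k : ℝ)
        = (∑ k ∈ Finset.range (n + 1), (-1 : ℝ) ^ (k+1) * (n.choose k : ℝ) * P.eval (((k+1:ℕ)) : ℝ))
          + (∑ k ∈ Finset.range (n + 1), f (k+1)) + P.eval ((0:ℕ) : ℝ) := by
      rw [Finset.sum_range_succ' _ (n+1), ← Finset.sum_add_distrib]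
      congr 1
      · refine Finset.sum_congr rfl fun k hk => ?_
        push_cast [Nat.choose_succ_succ, hf]
        ring
      · simp
    have step2 : ∑ k ∈ Finset.range (n + 1), (-1 : ℝ) ^ (k+1) * (n.choose k : ℝ) * P.eval (((k+1:ℕ)) : ℝ)
        = -ST := by
      rw [hST, ← Finset.sum_neg_distrib]
      refine Finset.sum_congr rfl fun k hk => ?_
      rw [htay k]
      ring
    have step3 : (∑ k ∈ Finset.range (n + 1), f (k+1)) + P.eval ((0:ℕ) : ℝ)
        = ∑ k ∈ Finset.range (n + 1), f k := by
      have h0 : P.eval ((0:ℕ) : ℝ) = f 0 := by simp [hf]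
      rw [h0, ← Finset.sum_range_succ' f (n+1), Finset.sum_range_succ]
      simp [hf]
    have step4 : ∑ k ∈ Finset.range (n + 1), (-1 : ℝ) ^ k * (n.choose k : ℝ) * Q.eval (k : ℝ)
        = ST - ∑ k ∈ Finset.range (n + 1), f k := by
      rw [hST, hf, ← Finset.sum_sub_distrib]
      refine Finset.sum_congr rfl fun k hk => ?_
      simp only [hQ, Polynomial.eval_sub]
      ring
    have final : ∑ k ∈ Finset.range (n + 2), (-1 : ℝ) ^ k * ((n+1).choose k : ℝ) * P.eval (k : ℝ)
        = - ∑ k ∈ Finset.range (n + 1), (-1 : ℝ) ^ k * (n.choose k : ℝ) * Q.eval (k : ℝ) := by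
      rw [step1, step2, add_assoc, step3, step4]
      ring
    rw [final, ih Q hQdeg, hQn]
    push_cast [Nat.factorial_succ]
    ring


open scoped BigOperators

theorem stmt_11 (n : ℕ) (α₁ α₂ β : ℝ) (s : ℕ) (hs : s ≤ n) :
    ∑ k ∈ Finset.range (n + 1),
      (-1 : ℝ) ^ k * (n.choose k : ℝ) *
        (α₁ + (k : ℝ) * β) ^ s * (α₂ + ((n - k : ℕ) : ℝ) * β) ^ (n - s)
      = (-1 : ℝ) ^ s * (n.factorial : ℝ) * β ^ n := by
  by_cases hβ : β = 0
  · subst hβ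
    rcases Nat.eq_zero_or_pos n with hn | hn
    · subst hn
      interval_cases s
      simp
    · have h0 : ∑ k ∈ Finset.range (n + 1),
          (-1 : ℝ) ^ k * (n.choose k : ℝ) * (α₁ + (k : ℝ) * 0) ^ s
            * (α₂ + ((n - k : ℕ) : ℝ) * 0) ^ (n - s)
          = (∑ k ∈ Finset.range (n + 1), (-1 : ℝ) ^ k * (n.choose k : ℝ))
            * (α₁ ^ s * α₂ ^ (n - s)) := by
        rw [Finset.sum_mul]
        refine Finset.sum_congr rfl fun k hk => by ring
      have h1 : (∑ k ∈ Finset.range (n + 1), (-1 : ℝ) ^ k * (n.choose k : ℝ)) = 0 := by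
        have := Int.alternating_sum_range_choose_of_ne (Nat.pos_iff_ne_zero.mp hn)
        exact_mod_cast congrArg (fun z : ℤ => (z : ℝ)) this
      rw [h0, h1]
      rw [zero_pow (Nat.pos_iff_ne_zero.mp hn)]
      ring
  · set p₁ : Polynomial ℝ := Polynomial.C β * Polynomial.X + Polynomial.C α₁ with hp₁
    set p₂ : Polynomial ℝ := Polynomial.C (-β) * Polynomial.X + Polynomial.C (α₂ + n * β) with hp₂
    set P : Polynomial ℝ := p₁ ^ s * p₂ ^ (n - s) with hPdef
    have hd1 : (p₁ ^ s).natDegree = s := by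
      rw [Polynomial.natDegree_pow, Polynomial.natDegree_linear hβ, mul_one]
    have hd2 : (p₂ ^ (n - s)).natDegree = n - s := by
      rw [Polynomial.natDegree_pow, Polynomial.natDegree_linear (neg_ne_zero.mpr hβ), mul_one]
    have hns : s + (n - s) = n := Nat.add_sub_cancel' hs
    have hPdeg : P.natDegree ≤ n := by
      refine le_trans (Polynomial.natDegree_mul_le) ?_
      rw [hd1, hd2, hns]
    have hPcoeff : P.coeff n = β ^ s * (-β) ^ (n - s) := by
      have := Polynomial.coeff_mul_degree_add_degree (p₁ ^ s) (p₂ ^ (n - s))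
      rw [hd1, hd2, hns] at this
      rw [hPdef, this, Polynomial.leadingCoeff_pow, Polynomial.leadingCoeff_pow,
        Polynomial.leadingCoeff_linear hβ, Polynomial.leadingCoeff_linear (neg_ne_zero.mpr hβ)]
    have heval : ∑ k ∈ Finset.range (n + 1),
        (-1 : ℝ) ^ k * (n.choose k : ℝ) *
          (α₁ + (k : ℝ) * β) ^ s * (α₂ + ((n - k : ℕ) : ℝ) * β) ^ (n - s)
        = ∑ k ∈ Finset.range (n + 1), (-1 : ℝ) ^ k * (n.choose k : ℝ) * P.eval (k : ℝ) := by
      refine Finset.sum_congr rfl fun k hk => ?_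
      have hk' : k ≤ n := Nat.lt_succ_iff.mp (Finset.mem_range.mp hk)
      have hcast : ((n - k : ℕ) : ℝ) = (n : ℝ) - k := by
        rw [Nat.cast_sub hk']
      rw [hcast]
      simp only [hPdef, hp₁, hp₂, Polynomial.eval_mul, Polynomial.eval_pow,
        Polynomial.eval_add, Polynomial.eval_C, Polynomial.eval_X, Polynomial.eval_neg]
      ring
    rw [heval, key_alt_sum n P hPdeg, hPcoeff]
    have h1 : ((-1 : ℝ) ^ (n - s)) * ((-1 : ℝ) ^ (n - s)) = 1 := by
      rw [← pow_add]
      exact Even.neg_one_pow ⟨n - s, rfl⟩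
    have hsgn : (-1 : ℝ) ^ n = (-1 : ℝ) ^ s * (-1 : ℝ) ^ (n - s) := by
      rw [← pow_add, hns]
    have hb : β ^ s * β ^ (n - s) = β ^ n := by rw [← pow_add, hns]
    rw [neg_pow β (n - s)]
    calc (-1 : ℝ) ^ n * (n.factorial : ℝ) * (β ^ s * ((-1 : ℝ) ^ (n - s) * β ^ (n - s)))
        = ((-1 : ℝ) ^ (n - s) * (-1 : ℝ) ^ (n - s))
            * ((-1 : ℝ) ^ s * (n.factorial : ℝ) * (β ^ s * β ^ (n - s))) := by
          rw [hsgn]; ring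
      _ = (-1 : ℝ) ^ s * (n.factorial : ℝ) * β ^ n := by rw [h1, hb, one_mul]
end

section
/- Let n ∈ ℕ, let f : ℝ → ℝ be n times differentiable at a point x ∈ ℝ with f(x) = 0. Then for every integer s with 0 ≤ s < n, the s-th derivative of the function f^n (the pointwise n-th power of f) at x is 0, and the n-th derivative of f^n at x equals n! · (f'(x))^n. -/
/-! By the Leibniz rule applied to `f ^ (m + 1) = f ^ m * f`, every term of the `s`-th derivative
of `f ^ (m + 1)` at a zero `x` of `f` contains either a derivative of `f ^ m` of order below `m`
or the factor `f x`; the one exception is the term `(m + 1) * (f ^ m)⁽ᵐ⁾(x) * f'(x)` when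
`s = m + 1`. Induction on `m` gives both claims. -/

variable {𝕜 : Type*} [NontriviallyNormedField 𝕜] {𝔸 : Type*} [NormedRing 𝔸] [NormedAlgebra 𝕜 𝔸]
  {f : 𝕜 → 𝔸} {x : 𝕜}

theorem iteratedDeriv_pow_eq_zero_of_lt_s12 {s m : ℕ} (hf : ContDiffAt 𝕜 s f x) (hfx : f x = 0)
    (hs : s < m) : iteratedDeriv s (fun t => f t ^ m) x = 0 := by
  induction m generalizing s with
  | zero => omega
  | succ m ih =>
    simp only [pow_succ]
    rw [iteratedDeriv_fun_mul (hf.pow m) hf]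
    refine Finset.sum_eq_zero fun i hi => ?_
    have his : i ≤ s := Finset.mem_range_succ_iff.mp hi
    rcases lt_or_eq_of_le (show i ≤ m by omega) with him | rfl
    · rw [ih (hf.of_le (by exact_mod_cast his)) him, mul_zero, zero_mul]
    · rw [show s - i = 0 by omega, iteratedDeriv_zero, hfx, mul_zero]

theorem iteratedDeriv_pow_self {m : ℕ} (hf : ContDiffAt 𝕜 m f x) (hfx : f x = 0) :
    iteratedDeriv m (fun t => f t ^ m) x = (m.factorial : 𝔸) * deriv f x ^ m := by
  induction m with
  | zero => simp
  | succ m ih =>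
    have lower_terms_vanish : ∀ i ∈ Finset.range m, ((m + 1).choose i : 𝔸) *
        iteratedDeriv i (fun t => f t ^ m) x * iteratedDeriv (m + 1 - i) f x = 0 := by
      intro i hi
      have him := Finset.mem_range.mp hi
      rw [iteratedDeriv_pow_eq_zero_of_lt_s12 (hf.of_le (by exact_mod_cast (by omega : i ≤ m + 1)))
        hfx him, mul_zero, zero_mul]
    simp only [pow_succ]
    rw [iteratedDeriv_fun_mul (hf.pow m) hf, Finset.sum_range_succ, Finset.sum_range_succ,
      Finset.sum_eq_zero lower_terms_vanish, ih (hf.of_le (by exact_mod_cast m.le_succ)),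
      Nat.sub_self, iteratedDeriv_zero, hfx, mul_zero, add_zero, Nat.succ_sub m.le_refl,
      Nat.sub_self, iteratedDeriv_one, Nat.choose_succ_self_right, Nat.factorial_succ]
    push_cast
    simp only [zero_add, mul_assoc]

theorem stmt_12 (n : ℕ) (f : ℝ → ℝ) (x : ℝ)
    (hf : ContDiffAt ℝ (n : ℕ∞) f x) (hfx : f x = 0) :
    (∀ s : ℕ, s < n → iteratedDeriv s (fun t => (f t) ^ n) x = 0) ∧
      iteratedDeriv n (fun t => (f t) ^ n) x = (n.factorial : ℝ) * (deriv f x) ^ n :=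
  ⟨fun _ hs => iteratedDeriv_pow_eq_zero_of_lt_s12 (hf.of_le (by exact_mod_cast hs.le)) hfx hs,
    iteratedDeriv_pow_self hf hfx⟩
end

section
/- Let n ∈ ℕ, r ∈ ℕ with r ≥ 1, let g₁,…,g_r : ℝ → ℝ be n times differentiable at a point x ∈ ℝ with g₁(x)+⋯+g_r(x) = 0, and define G : ℝ^r → ℝ by G(x₁,…,x_r) = (g₁(x₁)+⋯+g_r(x_r))^n. Then for every multi-index s = (s₁,…,s_r) of nonnegative integers with s₁+⋯+s_r < n, the mixed partial derivative ∂^{|s|} G / (∂x₁^{s₁} ⋯ ∂x_r^{s_r}) evaluated at the diagonal point (x,…,x) equals 0, and for every such multi-index with s₁+⋯+s_r = n it equals n! · Π_{i=1}^r (g_i'(x))^{s_i}. -/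
open scoped BigOperators

/-- The partial derivative of a function `G : ℝ^r → ℝ` in the `i`-th coordinate. -/
noncomputable def partialDeriv1 {r : ℕ} (i : Fin r) (G : (Fin r → ℝ) → ℝ) :
    (Fin r → ℝ) → ℝ :=
  fun y => deriv (fun t => G (Function.update y i t)) (y i)

/-- The iterated mixed partial derivative `∂^{|s|} / (∂x₁^{s₁} ⋯ ∂x_r^{s_r})`,
taking `s i` derivatives in the `i`-th coordinate. -/
noncomputable def mixedPartialDeriv {r : ℕ} (s : Fin r → ℕ) (G : (Fin r → ℝ) → ℝ) :
    (Fin r → ℝ) → ℝ :=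
  (List.finRange r).foldr (fun i H => (partialDeriv1 i)^[s i] H) G

/-! Write `S y = ∑ l, g l (y l)`. Differentiating `S ^ (n - |s|) * b` in the `i`-th coordinate
gives `S ^ (n - |s| - 1) * ((n - |s|) * g_i' * b + S * ∂_i b)`, so by induction on `s` every mixed
partial derivative of order `|s| ≤ n` of `S ^ n` has the form `S ^ (n - |s|) * b_s`, where `b_s`
is a polynomial in the derivatives of the `g l` of order at most `|s|` satisfying
`b_{s + e_i} = (n - |s|) * g_i' * b_s` wherever `S` vanishes. On the diagonal `S = 0`, hence
`b_s = n (n - 1) ⋯ (n - |s| + 1) * ∏ l, g_l' ^ s_l` there, and the factor `S ^ (n - |s|)` kills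
everything unless `|s| = n`. -/

open Function Set

theorem ContDiffAt.hasDerivAt_iteratedDeriv {𝕜 F : Type*} [NontriviallyNormedField 𝕜]
    [NormedAddCommGroup F] [NormedSpace 𝕜 F] {f : 𝕜 → F} {t : 𝕜} {n j : ℕ}
    (hf : ContDiffAt 𝕜 (n : ℕ∞) f t) (hj : j < n) :
    HasDerivAt (iteratedDeriv j f) (iteratedDeriv (j + 1) f t) t := by
  have hd : DifferentiableAt 𝕜 (iteratedDeriv j f) t :=
    (hf.differentiableAt_iteratedFDeriv (by exact_mod_cast hj)).continuousMultilinear_apply_const _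
  rw [iteratedDeriv_succ]
  exact hd.hasDerivAt

theorem Fintype.sum_add_pi_single {ι M : Type*} [Fintype ι] [DecidableEq ι] [AddCommMonoid M]
    (s : ι → M) (i : ι) (m : M) : ∑ l, (s + Pi.single i m : ι → M) l = ∑ l, s l + m := by
  simp [Finset.sum_add_distrib]

theorem Fintype.prod_pow_add_pi_single {ι M : Type*} [Fintype ι] [DecidableEq ι] [CommMonoid M]
    (c : ι → M) (s : ι → ℕ) (i : ι) :
    ∏ l, c l ^ (s + Pi.single i 1 : ι → ℕ) l = c i * ∏ l, c l ^ s l := by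
  simp only [Pi.add_apply, pow_add, Finset.prod_mul_distrib, Pi.single_apply, pow_ite, pow_one,
    pow_zero, Finset.prod_ite_eq', Finset.mem_univ, if_true, mul_comm]

section PartialDeriv

variable {ι : Type*} [DecidableEq ι]

def HasPartialDerivOn (i : ι) (F F' : (ι → ℝ) → ℝ) (V : Set (ι → ℝ)) : Prop :=
  ∀ y ∈ V, HasDerivAt (fun t => F (update y i t)) (F' y) (y i)

namespace HasPartialDerivOn

variable {i : ι} {F F' G G' : (ι → ℝ) → ℝ} {V : Set (ι → ℝ)}

theorem const (c : ℝ) : HasPartialDerivOn i (fun _ => c) 0 V :=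
  fun y _ => hasDerivAt_const (y i) c

theorem add (hF : HasPartialDerivOn i F F' V) (hG : HasPartialDerivOn i G G' V) :
    HasPartialDerivOn i (F + G) (F' + G') V :=
  fun y hy => (hF y hy).add (hG y hy)

theorem mul (hF : HasPartialDerivOn i F F' V) (hG : HasPartialDerivOn i G G' V) :
    HasPartialDerivOn i (F * G) (F' * G + F * G') V :=
  fun y hy => by
    have h := (hF y hy).fun_mul (hG y hy)
    rwa [update_eq_self] at h

theorem pow (hF : HasPartialDerivOn i F F' V) (p : ℕ) :
    HasPartialDerivOn i (F ^ p) (fun y => p * F y ^ (p - 1) * F' y) V :=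
  fun y hy => by
    have h := (hF y hy).fun_pow p
    rwa [update_eq_self] at h

end HasPartialDerivOn

theorem hasPartialDerivOn_comp_apply {φ φ' : ℝ → ℝ} {U : Set ℝ}
    (hφ : ∀ t ∈ U, HasDerivAt φ (φ' t) t) (i l : ι) :
    HasPartialDerivOn i (fun y => φ (y l)) (fun y => if l = i then φ' (y l) else 0)
      (univ.pi fun _ => U) := by
  intro y hy
  by_cases h : l = i
  · subst h
    simpa using hφ _ (hy l trivial)
  · simpa [update_of_ne h, h] using hasDerivAt_const (y i) (φ (y l))

theorem hasPartialDerivOn_sum_apply [Fintype ι] {g g' : ι → ℝ → ℝ} {U : Set ℝ}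
    (hg : ∀ l, ∀ t ∈ U, HasDerivAt (g l) (g' l t) t) (i : ι) :
    HasPartialDerivOn i (fun y => ∑ l, g l (y l)) (fun y => g' i (y i))
      (univ.pi fun _ => U) := by
  intro y hy
  simpa [Finset.sum_fn] using
    HasDerivAt.sum (u := Finset.univ) fun l _ => hasPartialDerivOn_comp_apply (hg l) i l y hy

theorem HasPartialDerivOn.partialDeriv1_eq {r : ℕ} {i : Fin r} {U : Set ℝ} (hU : IsOpen U)
    {F F' H : (Fin r → ℝ) → ℝ} (hF : HasPartialDerivOn i F F' (univ.pi fun _ => U))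
    (hH : EqOn H F (univ.pi fun _ => U)) {y : Fin r → ℝ} (hy : y ∈ univ.pi fun _ => U) :
    partialDeriv1 i H y = F' y := by
  refine ((hF y hy).congr_of_eventuallyEq ?_).deriv
  filter_upwards [hU.mem_nhds (hy i trivial)] with t ht
  exact hH ((update_mem_pi_iff_of_mem hy).2 fun _ => ht)

end PartialDeriv

section DerivAlgebra

variable {ι : Type*}

def iteratedDerivAlgebra (g : ι → ℝ → ℝ) (k : ℕ) : Subalgebra ℝ ((ι → ℝ) → ℝ) :=
  Algebra.adjoin ℝ {F | ∃ l, ∃ j ≤ k, F = fun y => iteratedDeriv j (g l) (y l)}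

variable {g : ι → ℝ → ℝ}

theorem iteratedDerivAlgebra_mono {k k' : ℕ} (h : k ≤ k') :
    iteratedDerivAlgebra g k ≤ iteratedDerivAlgebra g k' :=
  Algebra.adjoin_mono fun _ ⟨l, j, hj, hF⟩ => ⟨l, j, hj.trans h, hF⟩

theorem iteratedDeriv_apply_mem_iteratedDerivAlgebra {k j : ℕ} (hj : j ≤ k) (l : ι) :
    (fun y => iteratedDeriv j (g l) (y l)) ∈ iteratedDerivAlgebra g k :=
  Algebra.subset_adjoin ⟨l, j, hj, rfl⟩

theorem sum_apply_mem_iteratedDerivAlgebra [Fintype ι] (k : ℕ) :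
    (fun y => ∑ l, g l (y l)) ∈ iteratedDerivAlgebra g k := by
  have h := Subalgebra.sum_mem _ fun l (_ : l ∈ Finset.univ) =>
    iteratedDeriv_apply_mem_iteratedDerivAlgebra (g := g) (Nat.zero_le k) l
  simpa [Finset.sum_fn] using h

theorem deriv_apply_mem_iteratedDerivAlgebra {k : ℕ} (hk : 1 ≤ k) (l : ι) :
    (fun y => deriv (g l) (y l)) ∈ iteratedDerivAlgebra g k := by
  simpa using iteratedDeriv_apply_mem_iteratedDerivAlgebra (g := g) hk l

theorem exists_hasPartialDerivOn_of_mem_iteratedDerivAlgebra [DecidableEq ι] {n k : ℕ}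
    {U : Set ℝ}
    (hg : ∀ l, ∀ t ∈ U, ContDiffAt ℝ (n : ℕ∞) (g l) t) (hk : k < n) (i : ι)
    {a : (ι → ℝ) → ℝ} (ha : a ∈ iteratedDerivAlgebra g k) :
    ∃ a' ∈ iteratedDerivAlgebra g (k + 1), HasPartialDerivOn i a a' (univ.pi fun _ => U) := by
  induction ha using Algebra.adjoin_induction with
  | mem a ha =>
    obtain ⟨l, j, hj, rfl⟩ := ha
    refine ⟨_, ?_, hasPartialDerivOn_comp_apply
      (fun t ht => (hg l t ht).hasDerivAt_iteratedDeriv (hj.trans_lt hk)) i l⟩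
    by_cases h : l = i
    · simpa [h] using iteratedDeriv_apply_mem_iteratedDerivAlgebra (Nat.succ_le_succ hj) i
    · simp only [h, if_false]
      exact zero_mem _
  | algebraMap c => exact ⟨0, zero_mem _, HasPartialDerivOn.const c⟩
  | add a b _ _ ha hb =>
    obtain ⟨a', ha', hda⟩ := ha
    obtain ⟨b', hb', hdb⟩ := hb
    exact ⟨a' + b', add_mem ha' hb', hda.add hdb⟩
  | mul a b ha₀ hb₀ ha hb =>
    obtain ⟨a', ha', hda⟩ := ha
    obtain ⟨b', hb', hdb⟩ := hb
    have hmono := iteratedDerivAlgebra_mono (g := g) k.le_succ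
    exact ⟨a' * b + a * b', add_mem (mul_mem ha' (hmono hb₀)) (mul_mem (hmono ha₀) hb'),
      hda.mul hdb⟩

end DerivAlgebra

def HasSumPowForm {ι : Type*} [Fintype ι] (g : ι → ℝ → ℝ) (n : ℕ) (U : Set ℝ) (x : ℝ)
    (s : ι → ℕ) (H : (ι → ℝ) → ℝ) : Prop :=
  ∃ b ∈ iteratedDerivAlgebra g (∑ l, s l),
    EqOn H (fun y => (∑ l, g l (y l)) ^ (n - ∑ l, s l) * b y) (univ.pi fun _ => U) ∧
      b (fun _ => x) = n.descFactorial (∑ l, s l) * ∏ l, deriv (g l) x ^ s l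

section SumPow

variable {r n : ℕ} {g : Fin r → ℝ → ℝ} {U : Set ℝ} {x : ℝ}

theorem HasSumPowForm.partialDeriv (hU : IsOpen U)
    (hg : ∀ l, ∀ t ∈ U, ContDiffAt ℝ (n : ℕ∞) (g l) t) (hx : ∑ l, g l x = 0)
    {s : Fin r → ℕ} {H : (Fin r → ℝ) → ℝ} (h : HasSumPowForm g n U x s H) (i : Fin r)
    (hs : ∑ l, s l < n) :
    HasSumPowForm g n U x (s + Pi.single i 1) (partialDeriv1 i H) := by
  obtain ⟨b, hb, hH, hbx⟩ := h
  obtain ⟨b', hb', hdb⟩ := exists_hasPartialDerivOn_of_mem_iteratedDerivAlgebra hg hs i hb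
  obtain ⟨q, hq⟩ : ∃ q, n - ∑ l, s l = q + 1 := ⟨n - ∑ l, s l - 1, by omega⟩
  set S : (Fin r → ℝ) → ℝ := fun y => ∑ l, g l (y l)
  set g' : (Fin r → ℝ) → ℝ := fun y => deriv (g i) (y i)
  have hn : ((n : ℕ∞) : WithTop ℕ∞) ≠ 0 := by exact_mod_cast (by omega : n ≠ 0)
  have hS : HasPartialDerivOn i S g' (univ.pi fun _ => U) :=
    hasPartialDerivOn_sum_apply (fun l t ht => ((hg l t ht).differentiableAt hn).hasDerivAt) i
  have hH' : EqOn H (S ^ (q + 1) * b) (univ.pi fun _ => U) := fun y hy => by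
    rw [hH hy, hq]
    rfl
  refine ⟨(q + 1 : ℝ) • g' * b + S * b', ?_, fun y hy => ?_, ?_⟩
  · have hmono := iteratedDerivAlgebra_mono (g := g) (∑ l, s l).le_succ
    rw [Fintype.sum_add_pi_single]
    exact add_mem (mul_mem (Subalgebra.smul_mem _ (deriv_apply_mem_iteratedDerivAlgebra
      (Nat.le_add_left 1 _) i) _) (hmono hb)) (mul_mem (sum_apply_mem_iteratedDerivAlgebra _) hb')
  · rw [((hS.pow (q + 1)).mul hdb).partialDeriv1_eq hU hH' hy, Fintype.sum_add_pi_single,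
      show n - (∑ l, s l + 1) = q by omega]
    simp only [Pi.add_apply, Pi.mul_apply, Pi.smul_apply, Pi.pow_apply, smul_eq_mul]
    push_cast
    ring
  · rw [Fintype.sum_add_pi_single, Fintype.prod_pow_add_pi_single, Nat.descFactorial_succ, hq]
    simp only [Pi.add_apply, Pi.mul_apply, Pi.smul_apply, smul_eq_mul, S, g', hx, hbx]
    push_cast
    ring

theorem HasSumPowForm.iterate_partialDeriv (hU : IsOpen U)
    (hg : ∀ l, ∀ t ∈ U, ContDiffAt ℝ (n : ℕ∞) (g l) t) (hx : ∑ l, g l x = 0)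
    {s : Fin r → ℕ} {H : (Fin r → ℝ) → ℝ} (h : HasSumPowForm g n U x s H) (i : Fin r)
    {m : ℕ} (hm : ∑ l, s l + m ≤ n) :
    HasSumPowForm g n U x (s + Pi.single i m) ((partialDeriv1 i)^[m] H) := by
  induction m with
  | zero => simpa using h
  | succ m ih =>
    rw [iterate_succ_apply', Pi.single_add, ← add_assoc]
    exact (ih (by omega)).partialDeriv hU hg hx i (by rw [Fintype.sum_add_pi_single]; omega)

theorem hasSumPowForm_foldr (hU : IsOpen U)
    (hg : ∀ l, ∀ t ∈ U, ContDiffAt ℝ (n : ℕ∞) (g l) t) (hx : ∑ l, g l x = 0)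
    (s : Fin r → ℕ) (L : List (Fin r))
    (hL : ∑ l, (L.map fun i => Pi.single i (s i)).sum l ≤ n) :
    HasSumPowForm g n U x (L.map fun i => Pi.single i (s i)).sum
      (L.foldr (fun i H => (partialDeriv1 i)^[s i] H) fun y => (∑ l, g l (y l)) ^ n) := by
  induction L with
  | nil => exact ⟨1, one_mem _, fun y _ => by simp, by simp⟩
  | cons i L ih =>
    simp only [List.map_cons, List.sum_cons, List.foldr_cons] at hL ⊢
    rw [add_comm] at hL ⊢
    rw [Fintype.sum_add_pi_single] at hL
    exact HasSumPowForm.iterate_partialDeriv hU hg hx (ih (by omega)) i hL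

theorem mixedPartialDeriv_sum_pow_apply_const (hg : ∀ l, ContDiffAt ℝ (n : ℕ∞) (g l) x)
    (hx : ∑ l, g l x = 0) {s : Fin r → ℕ} (hs : ∑ l, s l ≤ n) :
    mixedPartialDeriv s (fun y => (∑ l, g l (y l)) ^ n) (fun _ => x)
      = 0 ^ (n - ∑ l, s l) * (n.descFactorial (∑ l, s l) * ∏ l, deriv (g l) x ^ s l) := by
  set U := {t | ∀ l, ContDiffAt ℝ (n : ℕ∞) (g l) t}
  have hU : IsOpen U := isOpen_iff_mem_nhds.2 fun t ht =>
    Filter.eventually_all.2 fun l => (ht l).eventually (by simp)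
  have hsum : ((List.finRange r).map fun i => Pi.single i (s i)).sum = s := by
    rw [← Fin.sum_univ_def, Finset.univ_sum_single]
  obtain ⟨b, -, hH, hbx⟩ :=
    hsum ▸ hasSumPowForm_foldr hU (fun l t ht => ht l) hx s (List.finRange r) (by rwa [hsum])
  rw [mixedPartialDeriv, hH fun l _ => hg]
  dsimp only
  rw [hbx, hx]

end SumPow

theorem stmt_13_general (n r : ℕ)
    (g : Fin r → ℝ → ℝ) (x : ℝ)
    (hg : ∀ i, ContDiffAt ℝ (n : ℕ∞) (g i) x)
    (hsum : ∑ i, g i x = 0)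
    (G : (Fin r → ℝ) → ℝ)
    (hG : G = fun y => (∑ i, g i (y i)) ^ n) :
    (∀ s : Fin r → ℕ, ∑ i, s i < n →
        mixedPartialDeriv s G (fun _ => x) = 0) ∧
      (∀ s : Fin r → ℕ, ∑ i, s i = n →
        mixedPartialDeriv s G (fun _ => x)
          = (n.factorial : ℝ) * ∏ i, (deriv (g i) x) ^ (s i)) := by
  subst hG
  refine ⟨fun s hs => ?_, fun s hs => ?_⟩
  · rw [mixedPartialDeriv_sum_pow_apply_const hg hsum hs.le, zero_pow (by omega), zero_mul]
  · rw [mixedPartialDeriv_sum_pow_apply_const hg hsum hs.le, hs, Nat.sub_self, pow_zero, one_mul,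
      Nat.descFactorial_self]

theorem stmt_13 (n r : ℕ) (hr : 1 ≤ r)
    (g : Fin r → ℝ → ℝ) (x : ℝ)
    (hg : ∀ i, ContDiffAt ℝ (n : ℕ∞) (g i) x)
    (hsum : ∑ i, g i x = 0)
    (G : (Fin r → ℝ) → ℝ)
    (hG : G = fun y => (∑ i, g i (y i)) ^ n) :
    (∀ s : Fin r → ℕ, ∑ i, s i < n →
        mixedPartialDeriv s G (fun _ => x) = 0) ∧
      (∀ s : Fin r → ℕ, ∑ i, s i = n →
        mixedPartialDeriv s G (fun _ => x)
          = (n.factorial : ℝ) * ∏ i, (deriv (g i) x) ^ (s i)) :=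
  stmt_13_general n r g x hg hsum G hG
end
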